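/- arXiv:1810.13077 — 3 statements merged into one kernel-verified Lean document; each statement's English description precedes it below -/
import Mathlib

section
/- Let t ≥ 3 and let G be a dense, C_t^3-free 3-graph such that [2t−2] ⊆ V(G) and every 3-element subset of [2t−2] except {1,2,3} is an edge of G. Let a, b, c be distinct vertices in V(G)∖[2t−2] and let i, j, k be distinct elements of [2t−2]. Then: (ii) at most one of {a,b,i} and {a,c,j} is an edge of G; and (iii) at most one of {a,i,j} and {a,b,k} is an edge of G. -/
open Finset

/-- An `r`-graph: a finite vertex set together with a finite set of edges,
each edge being a subset of the vertex set. (Uniformity is a separate predicate.) -/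
structure HyperGraph where
  verts : Finset ℕ
  edges : Finset (Finset ℕ)
  edge_sub : ∀ e ∈ edges, e ⊆ verts

namespace HyperGraph

/-- `G` is `r`-uniform: every edge has `r` vertices. -/
def IsUniform (G : HyperGraph) (r : ℕ) : Prop := ∀ e ∈ G.edges, e.card = r

def IsSubgraph (H G : HyperGraph) : Prop := H.verts ⊆ G.verts ∧ H.edges ⊆ G.edges

def IsProperSubgraph (H G : HyperGraph) : Prop := H.IsSubgraph G ∧ H ≠ G

/-- `G` contains a subgraph isomorphic to `F` (an injective copy of `F`). -/
def HasCopy (G F : HyperGraph) : Prop :=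
  ∃ f : ℕ → ℕ, Set.InjOn f ↑F.verts ∧ (∀ v ∈ F.verts, f v ∈ G.verts) ∧
    ∀ e ∈ F.edges, e.image f ∈ G.edges

/-- `G` is `F`-free: it contains no subgraph isomorphic to `F`. -/
def Free (G F : HyperGraph) : Prop := ¬ G.HasCopy F

/-- A feasible weight vector: nonnegative weights summing to 1 over the vertex set. -/
def IsWeighting (G : HyperGraph) (w : ℕ → ℝ) : Prop :=
  (∀ i, 0 ≤ w i) ∧ ∑ i ∈ G.verts, w i = 1

/-- The Lagrangian polynomial `λ(G, w) = Σ_{e ∈ E(G)} Π_{i ∈ e} w i`. -/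
def lagrangianAt (G : HyperGraph) (w : ℕ → ℝ) : ℝ := ∑ e ∈ G.edges, ∏ i ∈ e, w i

/-- The Lagrangian `λ(G)`: the maximum of `λ(G, w)` over feasible weight vectors. -/
noncomputable def lagrangian (G : HyperGraph) : ℝ :=
  sSup {x : ℝ | ∃ w : ℕ → ℝ, G.IsWeighting w ∧ x = G.lagrangianAt w}

/-- `G` is dense: every proper subgraph has strictly smaller Lagrangian. -/
def IsDense (G : HyperGraph) : Prop :=
  ∀ H : HyperGraph, H.IsProperSubgraph G → H.lagrangian < G.lagrangian

/-- The Lagrangian density `π_λ(F) = sup { r! · λ(G) : G an F-free r-graph }`. -/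
noncomputable def lagrangianDensity (r : ℕ) (F : HyperGraph) : ℝ :=
  sSup {x : ℝ | ∃ G : HyperGraph, G.IsUniform r ∧ G.Free F ∧
    x = (r.factorial : ℝ) * G.lagrangian}

/-- The subgraph of `G` induced by `A`. -/
def induce (G : HyperGraph) (A : Finset ℕ) : HyperGraph where
  verts := A
  edges := G.edges.filter (fun e => e ⊆ A)
  edge_sub := fun _ he => (Finset.mem_filter.mp he).2

/-- The link `N(a,b) = { c : {a,b,c} ∈ E(G) }`. -/
def link2 (G : HyperGraph) (a b : ℕ) : Set ℕ := {c | ({a, b, c} : Finset ℕ) ∈ G.edges}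

/-- `{a, b}` is a good pair to `A`. -/
def IsGoodPair (G : HyperGraph) (A : Finset ℕ) (a b : ℕ) : Prop :=
  a ≠ b ∧ a ∈ G.verts ∧ b ∈ G.verts ∧ a ∉ A ∧ b ∉ A ∧
    ∀ k ∈ A, G.link2 a k = {b} ∧ G.link2 b k = {a}

/-- The pairs `{a 1, b 1}, …, {a s, b s}` are good pairs to `A`
partitioning `V(G) ∖ A`. -/
def GoodPartition (G : HyperGraph) (A : Finset ℕ) (s : ℕ) (a b : ℕ → ℕ) : Prop :=
  A ⊆ G.verts ∧
  (∀ v, v ∈ G.verts \ A ↔ ∃ i ∈ Finset.Icc 1 s, v = a i ∨ v = b i) ∧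
  (∀ i ∈ Finset.Icc 1 s, ∀ j ∈ Finset.Icc 1 s, i ≠ j →
    ({a i, b i} : Finset ℕ) ∩ {a j, b j} = ∅) ∧
  (∀ i ∈ Finset.Icc 1 s, G.IsGoodPair A (a i) (b i))

/-- `G` is a good graph to `A`. -/
def IsGoodGraph (G : HyperGraph) (A : Finset ℕ) : Prop := ∃ s a b, G.GoodPartition A s a b

end HyperGraph

open HyperGraph

/-- The complete `r`-graph `K_t^r` on `t` vertices. -/
def completeHyperGraph (t r : ℕ) : HyperGraph where
  verts := Finset.Icc 1 t
  edges := (Finset.Icc 1 t).powersetCard r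
  edge_sub := fun _ he => (Finset.mem_powersetCard.mp he).1

/-- `K_t^{3-}`: the complete 3-graph on `t` vertices with one edge removed. -/
def completeMinus (t : ℕ) : HyperGraph where
  verts := Finset.Icc 1 t
  edges := ((Finset.Icc 1 t).powersetCard 3).filter (fun e => e ≠ ({1,2,3} : Finset ℕ))
  edge_sub := fun _ he => (Finset.mem_powersetCard.mp (Finset.mem_filter.mp he).1).1

/-- The generalized triangle `F_5 = {123, 124, 345}`. -/
def F5 : HyperGraph where
  verts := {1,2,3,4,5}
  edges := {{1,2,3},{1,2,4},{3,4,5}}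
  edge_sub := by decide

/-- The 3-uniform linear cycle of length 3: `C_3^3 = {123, 345, 561}`. -/
def C33 : HyperGraph where
  verts := {1,2,3,4,5,6}
  edges := {{1,2,3},{3,4,5},{5,6,1}}
  edge_sub := by decide

open scoped Classical in
/-- The 3-uniform linear cycle `C_t^3` of length `t`, with vertex set `[2t]` and
edges `{123, 345, …, (2t-3)(2t-2)(2t-1), (2t-1)(2t)1}`. -/
noncomputable def linearCycle (t : ℕ) : HyperGraph where
  verts := Finset.Icc 1 (2*t)
  edges := ((Finset.Icc 1 (2*t)).powersetCard 3).filter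
    (fun e => (∃ k < t - 1, e = ({2*k+1, 2*k+2, 2*k+3} : Finset ℕ)) ∨
      e = ({2*t-1, 2*t, 1} : Finset ℕ))
  edge_sub := fun _ he => (Finset.mem_powersetCard.mp (Finset.mem_filter.mp he).1).1

/-- The 3-graph `S_{2,t}` with vertex set `[t+2]` and edges `{12k : 3 ≤ k ≤ t+2}`. -/
def S2 (t : ℕ) : HyperGraph where
  verts := Finset.Icc 1 (t+2)
  edges := (Finset.Icc 3 (t+2)).image (fun k => ({1,2,k} : Finset ℕ))
  edge_sub := by
    intro e he
    simp only [Finset.mem_image] at he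
    obtain ⟨k, hk, rfl⟩ := he
    simp only [Finset.mem_Icc] at hk
    intro x hx
    simp only [Finset.mem_insert, Finset.mem_singleton] at hx
    simp only [Finset.mem_Icc]
    rcases hx with rfl | rfl | rfl <;> omega

/-- `F` is (up to relabeling) the disjoint union `G ⊔ H`. -/
def IsDisjointUnion (F G H : HyperGraph) : Prop :=
  ∃ f g : ℕ → ℕ, Set.InjOn f ↑G.verts ∧ Set.InjOn g ↑H.verts ∧
    Disjoint (G.verts.image f) (H.verts.image g) ∧
    F.verts = G.verts.image f ∪ H.verts.image g ∧
    F.edges = G.edges.image (fun e => e.image f) ∪ H.edges.image (fun e => e.image g)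

/-- An `r`-graph `H` on `t` vertices is perfect if `π_λ(H) = r! · λ(K_{t-1}^r)`. -/
def IsPerfect (r : ℕ) (H : HyperGraph) : Prop :=
  lagrangianDensity r H =
    (r.factorial : ℝ) * (completeHyperGraph (H.verts.card - 1) r).lagrangian

/-- The Turán number `ex(n, F)` for `r`-graphs on `n` vertices. -/
noncomputable def exNum (n r : ℕ) (F : HyperGraph) : ℕ :=
  sSup {m : ℕ | ∃ G : HyperGraph, G.IsUniform r ∧ G.verts.card = n ∧ G.Free F ∧
    m = G.edges.card}

/-- The defining property of an edge of `O_s`. -/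
def OsPred (s : ℕ) (e : Finset ℕ) : Prop :=
  ∃ i ∈ Finset.Icc 1 s, ∃ j ∈ Finset.Icc 1 s, i ≠ j ∧
    (e = ({2*i-1, 2*i, 2*j-1} : Finset ℕ) ∨ e = ({2*i-1, 2*i, 2*j} : Finset ℕ))

instance (s : ℕ) : DecidablePred (OsPred s) := fun e => by
  unfold OsPred; infer_instance

/-- The 3-graph `O_s` on vertices `a_i = 2i-1`, `b_i = 2i` (`1 ≤ i ≤ s`) with edges
`a_i b_i a_j` and `a_i b_i b_j` for `i ≠ j`. -/
def Os (s : ℕ) : HyperGraph where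
  verts := Finset.Icc 1 (2*s)
  edges := ((Finset.Icc 1 (2*s)).powersetCard 3).filter (OsPred s)
  edge_sub := fun _ he => (Finset.mem_powersetCard.mp (Finset.mem_filter.mp he).1).1

/-- `s = ⌈r^{r-1} / (2 (r-1)!)⌉`. -/
def sVal (r : ℕ) : ℕ := ⌈(r : ℚ)^(r-1) / (2 * ((r-1).factorial : ℚ))⌉₊

/-- The vertex `a_i`, realized as the natural number `r - 2 + i`. -/
def aVert (r i : ℕ) : ℕ := r - 2 + i

/-- The vertex `m_j`: a fresh vertex distinct from `1, …, r-2, a_1, a_2, a_3`. -/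
def mVert (r j : ℕ) : ℕ := r + 1 + j

/-- The edge `e_j = {1, 2, …, r-2, a_1, a_{j+1}}`. -/
def eEdge (r j : ℕ) : Finset ℕ := Finset.Icc 1 (r-2) ∪ {aVert r 1, aVert r (j+1)}

/-- The edge `{a_2, a_3, 1, …, i, m_1, …, m_{r-i-2}}` (for `i = 0` this is
`{a_2, a_3, m_1, …, m_{r-2}}`). -/
def thirdEdge (r i : ℕ) : Finset ℕ :=
  {aVert r 2, aVert r 3} ∪ Finset.Icc 1 i ∪ (Finset.Icc 1 (r - i - 2)).image (mVert r)

/-- The `r`-graph `F_i^r` with edges `e_1`, `e_2` and the third edge above. -/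
def Fgraph (r i : ℕ) : HyperGraph where
  verts := eEdge r 1 ∪ eEdge r 2 ∪ thirdEdge r i
  edges := {eEdge r 1, eEdge r 2, thirdEdge r i}
  edge_sub := by
    intro e he
    simp only [Finset.mem_insert, Finset.mem_singleton] at he
    rcases he with rfl | rfl | rfl
    · exact Finset.subset_union_left.trans Finset.subset_union_left
    · exact Finset.subset_union_right.trans Finset.subset_union_left
    · exact Finset.subset_union_right


/-! ### Auxiliary machinery for the proof -/

/-- The map sending cycle positions `1,…,5` to `x1,…,x5` and position `n ≥ 6` to the
`(n-6)`-th element of the list `L`. -/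
def pathMap (x1 x2 x3 x4 x5 : ℕ) (L : List ℕ) (n : ℕ) : ℕ :=
  if n = 1 then x1 else if n = 2 then x2 else if n = 3 then x3
  else if n = 4 then x4 else if n = 5 then x5 else L.getD (n - 6) 0

lemma pathMap_one (x1 x2 x3 x4 x5 : ℕ) (L : List ℕ) : pathMap x1 x2 x3 x4 x5 L 1 = x1 := rfl
lemma pathMap_two (x1 x2 x3 x4 x5 : ℕ) (L : List ℕ) : pathMap x1 x2 x3 x4 x5 L 2 = x2 := rfl
lemma pathMap_three (x1 x2 x3 x4 x5 : ℕ) (L : List ℕ) : pathMap x1 x2 x3 x4 x5 L 3 = x3 := rfl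
lemma pathMap_four (x1 x2 x3 x4 x5 : ℕ) (L : List ℕ) : pathMap x1 x2 x3 x4 x5 L 4 = x4 := rfl
lemma pathMap_five (x1 x2 x3 x4 x5 : ℕ) (L : List ℕ) : pathMap x1 x2 x3 x4 x5 L 5 = x5 := rfl

lemma pathMap_ge (x1 x2 x3 x4 x5 : ℕ) (L : List ℕ) {n : ℕ} (h : 6 ≤ n) :
    pathMap x1 x2 x3 x4 x5 L n = L.getD (n - 6) 0 := by
  unfold pathMap
  rw [if_neg (by omega), if_neg (by omega), if_neg (by omega), if_neg (by omega),
    if_neg (by omega)]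

lemma triple_card {u v z : ℕ} (h1 : u ≠ v) (h2 : u ≠ z) (h3 : v ≠ z) :
    ({u, v, z} : Finset ℕ).card = 3 := by
  rw [Finset.card_insert_of_notMem (by simp [h1, h2]),
    Finset.card_insert_of_notMem (by simp [h3]), Finset.card_singleton]

set_option maxHeartbeats 1600000 in
/-- Key lemma: a dense `C_t^3`-free graph containing `K_{2t-2}^{3-}` cannot have a
configuration `{x1,x2,x3}, {x3,x4,x5} ∈ E` with `x1, x5 ∈ [2t-2]`, a pool `S ⊆ [2t-2]`
of `2t-5` further vertices, and a suitable safety condition. -/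
lemma key_lemma (t : ℕ) (ht : 3 ≤ t) (G : HyperGraph)
    (hfree : G.Free (linearCycle t))
    (hsub : Finset.Icc 1 (2 * t - 2) ⊆ G.verts)
    (hK : ∀ e ⊆ Finset.Icc 1 (2 * t - 2), e.card = 3 →
      e ≠ ({1, 2, 3} : Finset ℕ) → e ∈ G.edges)
    (x1 x2 x3 x4 x5 : ℕ)
    (h12 : x1 ≠ x2) (h13 : x1 ≠ x3) (h14 : x1 ≠ x4) (h15 : x1 ≠ x5)
    (h23 : x2 ≠ x3) (h24 : x2 ≠ x4) (h25 : x2 ≠ x5)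
    (h34 : x3 ≠ x4) (h35 : x3 ≠ x5) (h45 : x4 ≠ x5)
    (hx1 : x1 ∈ Finset.Icc 1 (2 * t - 2)) (hx5 : x5 ∈ Finset.Icc 1 (2 * t - 2))
    (hx2v : x2 ∈ G.verts) (hx3v : x3 ∈ G.verts) (hx4v : x4 ∈ G.verts)
    (S : Finset ℕ) (hSA : S ⊆ Finset.Icc 1 (2 * t - 2)) (hScard : S.card = 2 * t - 5)
    (hS1 : x1 ∉ S) (hS2 : x2 ∉ S) (hS3 : x3 ∉ S) (hS4 : x4 ∉ S) (hS5 : x5 ∉ S)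
    (he1 : ({x1, x2, x3} : Finset ℕ) ∈ G.edges)
    (he2 : ({x3, x4, x5} : Finset ℕ) ∈ G.edges)
    (hsafe : (∃ d, 1 ≤ d ∧ d ≤ 3 ∧ d ∉ S ∧ d ≠ x1 ∧ d ≠ x5) ∨ 3 < x5) :
    False := by
  classical
  obtain ⟨L, hlen, hnodup, hsorted, hmemL⟩ :
      ∃ L : List ℕ, L.length = 2 * t - 5 ∧ L.Nodup ∧ List.Pairwise (· ≤ ·) L ∧
        ∀ x ∈ L, x ∈ S :=
    ⟨S.sort (· ≤ ·), by rw [Finset.length_sort, hScard], Finset.sort_nodup _ _,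
      Finset.pairwise_sort _ _, fun x hx => (Finset.mem_sort _).mp hx⟩
  obtain ⟨w, hw1, hw2, hw3, hw4, hw5, hwL⟩ :
      ∃ w : ℕ → ℕ, w 1 = x1 ∧ w 2 = x2 ∧ w 3 = x3 ∧ w 4 = x4 ∧ w 5 = x5 ∧
        ∀ n : ℕ, 6 ≤ n → w n = L.getD (n - 6) 0 :=
    ⟨pathMap x1 x2 x3 x4 x5 L, rfl, rfl, rfl, rfl, rfl,
      fun n hn => pathMap_ge _ _ _ _ _ _ hn⟩
  have hidx : ∀ n : ℕ, 6 ≤ n → n ≤ 2 * t → n - 6 < L.length := by intro n h6 h2t; omega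
  have hwL' : ∀ (n : ℕ) (h6 : 6 ≤ n) (h2t : n ≤ 2 * t), w n = L[n - 6]'(hidx n h6 h2t) := by
    intro n h6 h2t
    rw [hwL n h6, List.getD_eq_getElem L 0 (hidx n h6 h2t)]
  have hwS : ∀ n : ℕ, 6 ≤ n → n ≤ 2 * t → w n ∈ S := by
    intro n h6 h2t
    rw [hwL' n h6 h2t]
    exact hmemL _ (List.getElem_mem (hidx n h6 h2t))
  -- injectivity among positions ≥ 6
  have hinj6 : ∀ m n : ℕ, 6 ≤ m → m ≤ 2 * t → 6 ≤ n → n ≤ 2 * t → w m = w n → m = n := by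
    intro m n hm1 hm2 hn1 hn2 h
    rw [hwL' m hm1 hm2, hwL' n hn1 hn2] at h
    have := (List.Nodup.getElem_inj_iff hnodup).mp h
    omega
  -- monotonicity among positions ≥ 6
  have hmono : ∀ m n : ℕ, 6 ≤ m → m ≤ n → n ≤ 2 * t → w m ≤ w n := by
    intro m n hm hmn hn
    rcases eq_or_lt_of_le hmn with rfl | hlt
    · exact le_refl _
    · rw [hwL' m hm (by omega), hwL' n (by omega) hn]
      exact List.pairwise_iff_getElem.mp hsorted
        _ _ (hidx m hm (by omega)) (hidx n (by omega) hn) (by omega)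
  -- full injectivity on positions 1..2t
  have hinj : ∀ p q : ℕ, 1 ≤ p → p ≤ 2 * t → 1 ≤ q → q ≤ 2 * t → w p = w q → p = q := by
    have hlow : ∀ p q : ℕ, p ≤ 5 → 1 ≤ p → 1 ≤ q → 6 ≤ q → q ≤ 2 * t → w p ≠ w q := by
      intro p q hp5 hp1 hq1 hq6 hq2t h
      have hqS : w q ∈ S := hwS q hq6 hq2t
      interval_cases p <;>
        simp only [hw1, hw2, hw3, hw4, hw5] at h <;> rw [← h] at hqS <;>
        first
          | exact hS1 hqS | exact hS2 hqS | exact hS3 hqS | exact hS4 hqS | exact hS5 hqS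
    intro p q hp1 hp2 hq1 hq2 h
    by_cases hp : p ≤ 5 <;> by_cases hq : q ≤ 5
    · interval_cases p <;> interval_cases q <;>
        simp only [hw1, hw2, hw3, hw4, hw5] at h <;>
        first
          | rfl
          | (exfalso; first
              | exact h12 h | exact h13 h | exact h14 h | exact h15 h
              | exact h23 h | exact h24 h | exact h25 h
              | exact h34 h | exact h35 h | exact h45 h
              | exact h12 h.symm | exact h13 h.symm | exact h14 h.symm | exact h15 h.symm
              | exact h23 h.symm | exact h24 h.symm | exact h25 h.symm
              | exact h34 h.symm | exact h35 h.symm | exact h45 h.symm)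
    · exact absurd h (hlow p q hp hp1 hq1 (by omega) hq2)
    · exact absurd h.symm (hlow q p hq hq1 hp1 (by omega) hp2)
    · exact hinj6 p q (by omega) hp2 (by omega) hq2 h
  -- path values are in [2t-2]
  have hwA : ∀ n : ℕ, (n = 1 ∨ n = 5 ∨ (6 ≤ n ∧ n ≤ 2 * t)) →
      w n ∈ Finset.Icc 1 (2 * t - 2) := by
    rintro n (rfl | rfl | ⟨h6, h2t⟩)
    · rw [hw1]; exact hx1
    · rw [hw5]; exact hx5
    · exact hSA (hwS n h6 h2t)
  -- safety: no path edge equals {1,2,3}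
  have hx5first : 3 < x5 → ∀ y2 y3 : ℕ, ({x5, y2, y3} : Finset ℕ) ≠ {1, 2, 3} := by
    intro h5 y2 y3 heq
    have : x5 ∈ ({1, 2, 3} : Finset ℕ) := heq ▸ Finset.mem_insert_self _ _
    simp only [Finset.mem_insert, Finset.mem_singleton] at this
    omega
  have hpig : 3 < x5 → ∀ (y3 n1 n2 : ℕ), 7 ≤ n1 → n1 < n2 → n2 ≤ 2 * t →
      (y3 = x1 ∨ ∃ n3, 7 ≤ n3 ∧ n3 ≤ 2 * t ∧ y3 = w n3 ∧ n3 ≠ n1 ∧ n3 ≠ n2) →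
      ({w n1, w n2, y3} : Finset ℕ) ≠ {1, 2, 3} := by
    intro h5 y3 n1 n2 hn1 hn12 hn2 hy3 heq
    have hu : w 6 ∈ S := hwS 6 (le_refl _) (by omega)
    have hu1 : 1 ≤ w 6 := by
      have := hSA hu; rw [Finset.mem_Icc] at this; exact this.1
    have hwn1mem : w n1 ∈ ({1, 2, 3} : Finset ℕ) := heq ▸ Finset.mem_insert_self _ _
    have hwn1le : w n1 ≤ 3 := by
      simp only [Finset.mem_insert, Finset.mem_singleton] at hwn1mem; omega
    have hule : w 6 ≤ 3 := le_trans (hmono 6 n1 (le_refl _) (by omega) (by omega)) hwn1le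
    have humem : w 6 ∈ ({1, 2, 3} : Finset ℕ) := by
      simp only [Finset.mem_insert, Finset.mem_singleton]; omega
    rw [← heq] at humem
    simp only [Finset.mem_insert, Finset.mem_singleton] at humem
    rcases humem with h | h | h
    · have := hinj6 6 n1 (le_refl _) (by omega) (by omega) (by omega) h; omega
    · have := hinj6 6 n2 (le_refl _) (by omega) (by omega) (by omega) h; omega
    · rcases hy3 with rfl | ⟨n3, hn31, hn32, rfl, _, _⟩
      · exact hS1 (h ▸ hu)
      · have := hinj6 6 n3 (le_refl _) (by omega) (by omega) (by omega) h; omega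
  have hdavoid : (∃ d, 1 ≤ d ∧ d ≤ 3 ∧ d ∉ S ∧ d ≠ x1 ∧ d ≠ x5) →
      ∀ n1 n2 n3 : ℕ,
      (n1 = 1 ∨ n1 = 5 ∨ (6 ≤ n1 ∧ n1 ≤ 2 * t)) →
      (n2 = 1 ∨ n2 = 5 ∨ (6 ≤ n2 ∧ n2 ≤ 2 * t)) →
      (n3 = 1 ∨ n3 = 5 ∨ (6 ≤ n3 ∧ n3 ≤ 2 * t)) →
      ({w n1, w n2, w n3} : Finset ℕ) ≠ {1, 2, 3} := by
    rintro ⟨d, hd1, hd3, hdS, hdx1, hdx5⟩ n1 n2 n3 hn1 hn2 hn3 heq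
    have hdval : ∀ n : ℕ, (n = 1 ∨ n = 5 ∨ (6 ≤ n ∧ n ≤ 2 * t)) → d ≠ w n := by
      rintro n (rfl | rfl | ⟨h6, h2t⟩)
      · rw [hw1]; exact hdx1
      · rw [hw5]; exact hdx5
      · intro h; exact hdS (h ▸ hwS n h6 h2t)
    have hdmem : d ∈ ({1, 2, 3} : Finset ℕ) := by
      simp only [Finset.mem_insert, Finset.mem_singleton]; omega
    rw [← heq] at hdmem
    simp only [Finset.mem_insert, Finset.mem_singleton] at hdmem
    rcases hdmem with h | h | h
    · exact hdval n1 hn1 h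
    · exact hdval n2 hn2 h
    · exact hdval n3 hn3 h
  -- membership of path edges in G
  have hmk : ∀ n1 n2 n3 : ℕ,
      (n1 = 1 ∨ n1 = 5 ∨ (6 ≤ n1 ∧ n1 ≤ 2 * t)) →
      (n2 = 1 ∨ n2 = 5 ∨ (6 ≤ n2 ∧ n2 ≤ 2 * t)) →
      (n3 = 1 ∨ n3 = 5 ∨ (6 ≤ n3 ∧ n3 ≤ 2 * t)) →
      n1 ≠ n2 → n1 ≠ n3 → n2 ≠ n3 →
      ({w n1, w n2, w n3} : Finset ℕ) ≠ {1, 2, 3} →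
      ({w n1, w n2, w n3} : Finset ℕ) ∈ G.edges := by
    intro n1 n2 n3 hn1 hn2 hn3 hne12 hne13 hne23 hne
    have hb : ∀ n : ℕ, (n = 1 ∨ n = 5 ∨ (6 ≤ n ∧ n ≤ 2 * t)) → 1 ≤ n ∧ n ≤ 2 * t := by
      rintro n (rfl | rfl | ⟨h6, h2t⟩) <;> omega
    have hwne : ∀ m n : ℕ, (m = 1 ∨ m = 5 ∨ (6 ≤ m ∧ m ≤ 2 * t)) →
        (n = 1 ∨ n = 5 ∨ (6 ≤ n ∧ n ≤ 2 * t)) → m ≠ n → w m ≠ w n := by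
      intro m n hm hn hmn h
      exact hmn (hinj m n (hb m hm).1 (hb m hm).2 (hb n hn).1 (hb n hn).2 h)
    apply hK
    · intro z hz
      simp only [Finset.mem_insert, Finset.mem_singleton] at hz
      rcases hz with rfl | rfl | rfl
      · exact hwA n1 hn1
      · exact hwA n2 hn2
      · exact hwA n3 hn3
    · exact triple_card (hwne n1 n2 hn1 hn2 hne12) (hwne n1 n3 hn1 hn3 hne13)
        (hwne n2 n3 hn2 hn3 hne23)
    · exact hne
  -- build the copy of the linear cycle
  apply hfree
  refine ⟨w, ?_, ?_, ?_⟩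
  · intro p hp q hq h
    simp only [linearCycle, Finset.coe_Icc, Set.mem_Icc] at hp hq
    exact hinj p q hp.1 hp.2 hq.1 hq.2 h
  · intro v hv
    simp only [linearCycle, Finset.mem_Icc] at hv
    obtain ⟨hv1, hv2⟩ := hv
    by_cases h5 : v ≤ 5
    · interval_cases v
      · rw [hw1]; exact hsub hx1
      · rw [hw2]; exact hx2v
      · rw [hw3]; exact hx3v
      · rw [hw4]; exact hx4v
      · rw [hw5]; exact hsub hx5
    · exact hsub (hSA (hwS v (by omega) hv2))
  · intro e he
    simp only [linearCycle, Finset.mem_filter, Finset.mem_powersetCard] at he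
    obtain ⟨-, hcond⟩ := he
    have himage : ∀ a b c : ℕ, ({a, b, c} : Finset ℕ).image w = {w a, w b, w c} := by
      intro a b c
      simp [Finset.image_insert, Finset.image_singleton]
    rcases hcond with ⟨k, hk, rfl⟩ | rfl
    · rw [himage]
      by_cases hk0 : k = 0
      · subst hk0; norm_num
        rw [hw1, hw2, hw3]; exact he1
      by_cases hk1 : k = 1
      · subst hk1; norm_num
        rw [hw3, hw4, hw5]; exact he2
      -- k ≥ 2
      have hk2 : 2 ≤ k := by omega
      have hkt : k ≤ t - 2 := by omega
      have hb1 : 2 * k + 1 = 5 ∨ (6 ≤ 2 * k + 1 ∧ 2 * k + 1 ≤ 2 * t) := by omega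
      have hb2 : 6 ≤ 2 * k + 2 ∧ 2 * k + 2 ≤ 2 * t := by omega
      have hb3 : 6 ≤ 2 * k + 3 ∧ 2 * k + 3 ≤ 2 * t := by omega
      apply hmk _ _ _ (by omega) (Or.inr (Or.inr hb2)) (Or.inr (Or.inr hb3))
        (by omega) (by omega) (by omega)
      rcases hsafe with hd | h5
      · exact hdavoid hd _ _ _ (by omega) (Or.inr (Or.inr hb2)) (Or.inr (Or.inr hb3))
      · by_cases hk2' : k = 2
        · subst hk2'; norm_num
          rw [hw5]; exact hx5first h5 _ _
        · have h7 : 7 ≤ 2 * k + 1 := by omega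
          exact hpig h5 (w (2 * k + 3)) (2 * k + 1) (2 * k + 2) h7 (by omega) (by omega)
            (Or.inr ⟨2 * k + 3, by omega, by omega, rfl, by omega, by omega⟩)
    · rw [himage]
      have hb1 : 2 * t - 1 = 1 ∨ 2 * t - 1 = 5 ∨ (6 ≤ 2 * t - 1 ∧ 2 * t - 1 ≤ 2 * t) := by
        omega
      have hb2 : 6 ≤ 2 * t ∧ 2 * t ≤ 2 * t := by omega
      apply hmk _ _ _ hb1 (Or.inr (Or.inr hb2)) (Or.inl rfl)
        (by omega) (by omega) (by omega)
      rcases hsafe with hd | h5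
      · exact hdavoid hd _ _ _ hb1 (Or.inr (Or.inr hb2)) (Or.inl rfl)
      · by_cases ht3 : t = 3
        · subst ht3; norm_num
          rw [hw5]; exact hx5first h5 _ _
        · rw [hw1]
          exact hpig h5 x1 (2 * t - 1) (2 * t) (by omega) (by omega) (le_refl _)
            (Or.inl rfl)


set_option maxHeartbeats 1600000 in
/-- let `t ≥ 3` and let `G` be a dense `C_t^3`-free 3-graph such that
every 3-subset of `[2t-2]` except `{1,2,3}` is an edge.  For distinct vertices
`a, b, c ∉ [2t-2]` and distinct `i, j, k ∈ [2t-2]`: (ii) at most one of `{a,b,i}` and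
`{a,c,j}` is an edge; (iii) at most one of `{a,i,j}` and `{a,b,k}` is an edge. -/
theorem at_most_one_edge_shared (t : ℕ) (ht : 3 ≤ t) (G : HyperGraph)
    (h3 : G.IsUniform 3) (hd : G.IsDense) (hfree : G.Free (linearCycle t))
    (hsub : Finset.Icc 1 (2 * t - 2) ⊆ G.verts)
    (hK : ∀ e ⊆ Finset.Icc 1 (2 * t - 2), e.card = 3 →
      e ≠ ({1, 2, 3} : Finset ℕ) → e ∈ G.edges)
    (a b c : ℕ) (ha : a ∈ G.verts) (hb : b ∈ G.verts) (hc : c ∈ G.verts)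
    (hab : a ≠ b) (hac : a ≠ c) (hbc : b ≠ c)
    (haA : a ∉ Finset.Icc 1 (2 * t - 2)) (hbA : b ∉ Finset.Icc 1 (2 * t - 2))
    (hcA : c ∉ Finset.Icc 1 (2 * t - 2))
    (i j k : ℕ)
    (hi : i ∈ Finset.Icc 1 (2 * t - 2)) (hj : j ∈ Finset.Icc 1 (2 * t - 2))
    (hk : k ∈ Finset.Icc 1 (2 * t - 2))
    (hij : i ≠ j) (hik : i ≠ k) (hjk : j ≠ k) :
    ¬(({a, b, i} : Finset ℕ) ∈ G.edges ∧ ({a, c, j} : Finset ℕ) ∈ G.edges) ∧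
      ¬(({a, i, j} : Finset ℕ) ∈ G.edges ∧ ({a, b, k} : Finset ℕ) ∈ G.edges) := by
  have h2t4 : 4 ≤ 2 * t - 2 := by omega
  have hiI : 1 ≤ i ∧ i ≤ 2 * t - 2 := Finset.mem_Icc.mp hi
  have hjI : 1 ≤ j ∧ j ≤ 2 * t - 2 := Finset.mem_Icc.mp hj
  have hkI : 1 ≤ k ∧ k ≤ 2 * t - 2 := Finset.mem_Icc.mp hk
  have hcard : (Finset.Icc 1 (2 * t - 2)).card = 2 * t - 2 := by
    rw [Nat.card_Icc]; omega
  constructor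
  · rintro ⟨h1, h2⟩
    -- pick d ∈ {1,2,3} \ {i,j}
    obtain ⟨d, hd1, hd3, hdi, hdj⟩ : ∃ d, 1 ≤ d ∧ d ≤ 3 ∧ d ≠ i ∧ d ≠ j := by
      have : (i ≠ 1 ∧ j ≠ 1) ∨ (i ≠ 2 ∧ j ≠ 2) ∨ (i ≠ 3 ∧ j ≠ 3) := by omega
      rcases this with ⟨u, v⟩ | ⟨u, v⟩ | ⟨u, v⟩
      · exact ⟨1, le_refl _, by omega, Ne.symm u, Ne.symm v⟩
      · exact ⟨2, by omega, by omega, Ne.symm u, Ne.symm v⟩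
      · exact ⟨3, by omega, le_refl _, Ne.symm u, Ne.symm v⟩
    have hdIcc : d ∈ Finset.Icc 1 (2 * t - 2) := Finset.mem_Icc.mpr ⟨hd1, by omega⟩
    set S : Finset ℕ := Finset.Icc 1 (2 * t - 2) \ {i, j, d} with hSdef
    have hSA : S ⊆ Finset.Icc 1 (2 * t - 2) := Finset.sdiff_subset
    have hsub3 : ({i, j, d} : Finset ℕ) ⊆ Finset.Icc 1 (2 * t - 2) := by
      intro z hz
      simp only [Finset.mem_insert, Finset.mem_singleton] at hz
      rcases hz with rfl | rfl | rfl
      · exact hi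
      · exact hj
      · exact hdIcc
    have hScard : S.card = 2 * t - 5 := by
      rw [hSdef, Finset.card_sdiff_of_subset hsub3, hcard,
        triple_card hij (Ne.symm hdi) (Ne.symm hdj)]
      omega
    have hnotA : ∀ x : ℕ, x ∉ Finset.Icc 1 (2 * t - 2) → x ∉ S := by
      intro x hx hxS
      exact hx (hSA hxS)
    have hiS : i ∉ S := by simp [hSdef]
    have hjS : j ∉ S := by simp [hSdef]
    have hdS : d ∉ S := by simp [hSdef]
    have hib : i ≠ b := by rintro rfl; exact hbA hi
    have hia : i ≠ a := by rintro rfl; exact haA hi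
    have hic : i ≠ c := by rintro rfl; exact hcA hi
    have hja : j ≠ a := by rintro rfl; exact haA hj
    have hjb : j ≠ b := by rintro rfl; exact hbA hj
    have hjc : j ≠ c := by rintro rfl; exact hcA hj
    have he1' : ({i, b, a} : Finset ℕ) ∈ G.edges := by
      have : ({i, b, a} : Finset ℕ) = {a, b, i} := by ext x; simp; tauto
      rw [this]; exact h1
    have he2' : ({a, c, j} : Finset ℕ) ∈ G.edges := h2
    exact key_lemma t ht G hfree hsub hK i b a c j
      hib hia hic hij (Ne.symm hab) hbc (Ne.symm hjb) hac (Ne.symm hja)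
      (Ne.symm hjc) hi hj hb ha hc S hSA hScard hiS (hnotA b hbA) (hnotA a haA)
      (hnotA c hcA) hjS he1' he2'
      (Or.inl ⟨d, hd1, hd3, hdS, hdi, hdj⟩)
  · rintro ⟨h1, h2⟩
    set S : Finset ℕ := Finset.Icc 1 (2 * t - 2) \ {i, j, k} with hSdef
    have hSA : S ⊆ Finset.Icc 1 (2 * t - 2) := Finset.sdiff_subset
    have hsub3 : ({i, j, k} : Finset ℕ) ⊆ Finset.Icc 1 (2 * t - 2) := by
      intro z hz
      simp only [Finset.mem_insert, Finset.mem_singleton] at hz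
      rcases hz with rfl | rfl | rfl
      · exact hi
      · exact hj
      · exact hk
    have hScard : S.card = 2 * t - 5 := by
      rw [hSdef, Finset.card_sdiff_of_subset hsub3, hcard, triple_card hij hik hjk]
      omega
    have hnotA : ∀ x : ℕ, x ∉ Finset.Icc 1 (2 * t - 2) → x ∉ S := by
      intro x hx hxS
      exact hx (hSA hxS)
    have hiS : i ∉ S := by simp [hSdef]
    have hjS : j ∉ S := by simp [hSdef]
    have hkS : k ∉ S := by simp [hSdef]
    have hia : i ≠ a := by rintro rfl; exact haA hi
    have hib : i ≠ b := by rintro rfl; exact hbA hi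
    have hja : j ≠ a := by rintro rfl; exact haA hj
    have hjb : j ≠ b := by rintro rfl; exact hbA hj
    have hka : k ≠ a := by rintro rfl; exact haA hk
    have hkb : k ≠ b := by rintro rfl; exact hbA hk
    have he1' : ({k, b, a} : Finset ℕ) ∈ G.edges := by
      have : ({k, b, a} : Finset ℕ) = {a, b, k} := by ext x; simp; tauto
      rw [this]; exact h2
    by_cases hi3 : i ≤ 3
    · -- x4 = i, x5 = j
      exact key_lemma t ht G hfree hsub hK k b a i j
        hkb hka (Ne.symm hik) (Ne.symm hjk) (Ne.symm hab) (Ne.symm hib) (Ne.symm hjb)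
        (Ne.symm hia) (Ne.symm hja) hij hk hj hb ha (hsub hi) S hSA hScard hkS
        (hnotA b hbA) (hnotA a haA) hiS hjS he1' h1
        (Or.inl ⟨i, Finset.mem_Icc.mp hi |>.1, hi3, hiS, hik, hij⟩)
    · -- x4 = j, x5 = i, with 3 < i
      have he2' : ({a, j, i} : Finset ℕ) ∈ G.edges := by
        have : ({a, j, i} : Finset ℕ) = {a, i, j} := by ext x; simp; tauto
        rw [this]; exact h1
      exact key_lemma t ht G hfree hsub hK k b a j i
        hkb hka (Ne.symm hjk) (Ne.symm hik) (Ne.symm hab) (Ne.symm hjb) (Ne.symm hib)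
        (Ne.symm hja) (Ne.symm hia) (Ne.symm hij) hk hi hb ha (hsub hj) S hSA hScard
        hkS (hnotA b hbA) (hnotA a haA) hjS hiS he1' he2'
        (Or.inr (by omega))
end

section
/- Let t ≥ 3 and let G be a dense, C_t^3-free 3-graph which is a good graph to a set A ⊆ V(G), with good pairs {a_1,b_1},…,{a_s,b_s} partitioning V(G)∖A, and suppose the induced subgraph G[A] contains K_{2t−2}^{3−}. Then for every pair of indices i ≠ j, either {a_i,b_i} ≥ {a_j,b_j} or {a_j,b_j} ≥ {a_i,b_i}, where for good pairs {a,b} and {c,d} to A the relation {a,b} ≥ {c,d} means that both {a,b,c} and {a,b,d} are edges of G. -/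
open Finset

open HyperGraph

namespace HyperGraph


lemma weight_le_one {G : HyperGraph} {w : ℕ → ℝ} (hw : G.IsWeighting w) {i : ℕ}
    (hi : i ∈ G.verts) : w i ≤ 1 := by
  have h := Finset.single_le_sum (f := w) (fun j _ => hw.1 j) hi
  rw [hw.2] at h; exact h

lemma lagrangianAt_le {G : HyperGraph} {w : ℕ → ℝ} (hw : G.IsWeighting w) :
    G.lagrangianAt w ≤ (G.edges.card : ℝ) := by
  calc G.lagrangianAt w ≤ ∑ _e ∈ G.edges, (1:ℝ) := by
        refine Finset.sum_le_sum fun e he => ?_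
        exact Finset.prod_le_one (fun i _ => hw.1 i)
          (fun i hi => weight_le_one hw (G.edge_sub e he hi))
    _ = (G.edges.card : ℝ) := by simp

lemma bddAbove_lagSet (G : HyperGraph) :
    BddAbove {x : ℝ | ∃ w : ℕ → ℝ, G.IsWeighting w ∧ x = G.lagrangianAt w} := by
  refine ⟨(G.edges.card : ℝ), ?_⟩
  rintro x ⟨w, hw, rfl⟩
  exact lagrangianAt_le hw

lemma lagrangianAt_nonneg {G : HyperGraph} {w : ℕ → ℝ} (hw : G.IsWeighting w) :
    0 ≤ G.lagrangianAt w :=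
  Finset.sum_nonneg fun e _ => Finset.prod_nonneg fun i _ => hw.1 i

lemma lagrangian_nonneg {G : HyperGraph} (h : G.verts.Nonempty) : 0 ≤ G.lagrangian := by
  obtain ⟨u, hu⟩ := h
  have hw : G.IsWeighting (fun i => if i = u then 1 else 0) := by
    constructor
    · intro i; dsimp only; split <;> norm_num
    · simp [Finset.sum_ite_eq', hu]
  refine le_trans (lagrangianAt_nonneg hw) ?_
  exact le_csSup (bddAbove_lagSet G) ⟨_, hw, rfl⟩

lemma lag_split (G : HyperGraph) (w : ℕ → ℝ) (z : ℕ) :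
    G.lagrangianAt w =
      w z * (∑ e ∈ G.edges.filter (fun e => z ∈ e), ∏ i ∈ e.erase z, w i) +
      ∑ e ∈ G.edges.filter (fun e => z ∉ e), ∏ i ∈ e, w i := by
  rw [lagrangianAt, ← Finset.sum_filter_add_sum_filter_not G.edges (fun e => z ∈ e),
    Finset.mul_sum]
  congr 1
  refine Finset.sum_congr rfl fun e he => ?_
  exact (Finset.mul_prod_erase e w (Finset.mem_filter.mp he).2).symm

lemma lag_eval (G : HyperGraph) (u v : ℕ)
    (hno : ∀ e ∈ G.edges, ¬(u ∈ e ∧ v ∈ e)) (w : ℕ → ℝ) :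
    G.lagrangianAt w =
      w u * (∑ e ∈ G.edges.filter (fun e => u ∈ e), ∏ i ∈ e.erase u, w i) +
      (w v * (∑ e ∈ G.edges.filter (fun e => v ∈ e), ∏ i ∈ e.erase v, w i) +
      ∑ e ∈ G.edges.filter (fun e => u ∉ e ∧ v ∉ e), ∏ i ∈ e, w i) := by
  rw [lag_split G w u]
  congr 1
  rw [← Finset.sum_filter_add_sum_filter_not (G.edges.filter (fun e => u ∉ e))
    (fun e => v ∈ e), Finset.filter_filter, Finset.filter_filter]
  have hfc : G.edges.filter (fun e => u ∉ e ∧ v ∈ e) = G.edges.filter (fun e => v ∈ e) :=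
    Finset.filter_congr fun e he => by
      constructor
      · exact fun h => h.2
      · exact fun h => ⟨fun hu => hno e he ⟨hu, h⟩, h⟩
  rw [hfc, Finset.mul_sum]
  congr 1
  refine Finset.sum_congr rfl fun e he => ?_
  exact (Finset.mul_prod_erase e w (Finset.mem_filter.mp he).2).symm

def delVert (G : HyperGraph) (v : ℕ) : HyperGraph where
  verts := G.verts.erase v
  edges := G.edges.filter (fun e => v ∉ e)
  edge_sub := by
    intro e he x hx
    have h := Finset.mem_filter.mp he
    exact Finset.mem_erase.mpr ⟨fun hh => h.2 (hh ▸ hx), G.edge_sub e h.1 hx⟩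

lemma delVert_proper {G : HyperGraph} {v : ℕ} (hv : v ∈ G.verts) :
    (G.delVert v).IsProperSubgraph G := by
  refine ⟨⟨Finset.erase_subset _ _, Finset.filter_subset _ _⟩, ?_⟩
  intro h
  have h2 : v ∈ G.verts.erase v := by
    have := congrArg HyperGraph.verts h
    rw [show (G.delVert v).verts = G.verts.erase v from rfl] at this
    rw [this]; exact hv
  simp at h2

lemma shift_le (G : HyperGraph) (u v : ℕ) (hu : u ∈ G.verts) (hv : v ∈ G.verts)
    (huv : u ≠ v) (hno : ∀ e ∈ G.edges, ¬(u ∈ e ∧ v ∈ e)) (w : ℕ → ℝ)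
    (hw : G.IsWeighting w)
    (hP : (∑ e ∈ G.edges.filter (fun e => v ∈ e), ∏ i ∈ e.erase v, w i) ≤
      (∑ e ∈ G.edges.filter (fun e => u ∈ e), ∏ i ∈ e.erase u, w i)) :
    G.lagrangianAt w ≤ (G.delVert v).lagrangian := by
  set w' : ℕ → ℝ := fun i => if i = v then 0 else if i = u then w u + w v else w i with hw'def
  have hw'u : w' u = w u + w v := by simp [hw'def, huv]
  have hw'v : w' v = 0 := by simp [hw'def]
  have hagree : ∀ i, i ≠ u → i ≠ v → w' i = w i := by
    intro i h1 h2; simp [hw'def, h1, h2]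
  -- w' is a weighting of G.delVert v
  have hsum : ∑ i ∈ G.verts, w' i = 1 := by
    rw [← Finset.add_sum_erase _ w' hu, ← Finset.add_sum_erase _ w'
      (Finset.mem_erase.mpr ⟨huv.symm, hv⟩), hw'u, hw'v]
    have : ∑ i ∈ (G.verts.erase u).erase v, w' i = ∑ i ∈ (G.verts.erase u).erase v, w i := by
      refine Finset.sum_congr rfl fun i hi => ?_
      have h1 := Finset.mem_erase.mp hi
      have h2 := Finset.mem_erase.mp h1.2
      exact hagree i h2.1 h1.1
    rw [this]
    have := hw.2
    rw [← Finset.add_sum_erase _ w hu, ← Finset.add_sum_erase _ w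
      (Finset.mem_erase.mpr ⟨huv.symm, hv⟩)] at this
    linarith
  have hw'W : (G.delVert v).IsWeighting w' := by
    constructor
    · intro i
      simp only [hw'def]
      split
      · exact le_refl 0
      · split
        · exact add_nonneg (hw.1 u) (hw.1 v)
        · exact hw.1 i
    · rw [show (G.delVert v).verts = G.verts.erase v from rfl]
      rw [← Finset.add_sum_erase _ w' hv] at hsum
      rw [hw'v, zero_add] at hsum
      exact hsum
  -- value comparison
  have hval : G.lagrangianAt w ≤ G.lagrangianAt w' := by
    rw [lag_eval G u v hno w, lag_eval G u v hno w']
    have hCu : ∑ e ∈ G.edges.filter (fun e => u ∈ e), ∏ i ∈ e.erase u, w' i =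
        ∑ e ∈ G.edges.filter (fun e => u ∈ e), ∏ i ∈ e.erase u, w i := by
      refine Finset.sum_congr rfl fun e he => Finset.prod_congr rfl fun i hi => ?_
      have h1 := Finset.mem_erase.mp hi
      have he' := Finset.mem_filter.mp he
      refine hagree i h1.1 fun hiv => hno e he'.1 ⟨he'.2, hiv ▸ h1.2⟩
    have hC0 : ∑ e ∈ G.edges.filter (fun e => u ∉ e ∧ v ∉ e), ∏ i ∈ e, w' i =
        ∑ e ∈ G.edges.filter (fun e => u ∉ e ∧ v ∉ e), ∏ i ∈ e, w i := by
      refine Finset.sum_congr rfl fun e he => Finset.prod_congr rfl fun i hi => ?_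
      have he' := (Finset.mem_filter.mp he).2
      exact hagree i (fun h => he'.1 (h ▸ hi)) (fun h => he'.2 (h ▸ hi))
    rw [hCu, hC0, hw'u, hw'v, zero_mul, zero_add]
    have h2 := mul_le_mul_of_nonneg_left hP (hw.1 v)
    linarith
  have hval2 : G.lagrangianAt w' = (G.delVert v).lagrangianAt w' := by
    rw [show (G.delVert v).lagrangianAt w' =
      ∑ e ∈ G.edges.filter (fun e => v ∉ e), ∏ i ∈ e, w' i from rfl]
    rw [lagrangianAt, ← Finset.sum_filter_add_sum_filter_not G.edges (fun e => v ∉ e)]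
    have : ∑ e ∈ G.edges.filter (fun e => ¬ v ∉ e), ∏ i ∈ e, w' i = 0 := by
      refine Finset.sum_eq_zero fun e he => ?_
      have he' := (Finset.mem_filter.mp he).2
      rw [not_not] at he'
      exact Finset.prod_eq_zero he' hw'v
    rw [this, add_zero]
  calc G.lagrangianAt w ≤ G.lagrangianAt w' := hval
    _ = (G.delVert v).lagrangianAt w' := hval2
    _ ≤ (G.delVert v).lagrangian := le_csSup (bddAbove_lagSet _) ⟨w', hw'W, rfl⟩

theorem exists_cover (G : HyperGraph) (hd : G.IsDense) {u v : ℕ} (hu : u ∈ G.verts)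
    (hv : v ∈ G.verts) (huv : u ≠ v) : ∃ e ∈ G.edges, u ∈ e ∧ v ∈ e := by
  by_contra hc
  push_neg at hc
  have hno : ∀ e ∈ G.edges, ¬(u ∈ e ∧ v ∈ e) := fun e he h => hc e he h.1 h.2
  have hno' : ∀ e ∈ G.edges, ¬(v ∈ e ∧ u ∈ e) := fun e he h => hc e he h.2 h.1
  have h1 := hd _ (delVert_proper hu)
  have h2 := hd _ (delVert_proper hv)
  have hle : G.lagrangian ≤ max (G.delVert u).lagrangian (G.delVert v).lagrangian := by
    apply Real.sSup_le
    · rintro x ⟨w, hw, rfl⟩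
      rcases le_total (∑ e ∈ G.edges.filter (fun e => v ∈ e), ∏ i ∈ e.erase v, w i)
        (∑ e ∈ G.edges.filter (fun e => u ∈ e), ∏ i ∈ e.erase u, w i) with h | h
      · exact le_max_of_le_right (shift_le G u v hu hv huv hno w hw h)
      · exact le_max_of_le_left (shift_le G v u hv hu huv.symm hno' w hw h)
    · refine le_trans (lagrangian_nonneg ⟨u, ?_⟩) (le_max_right _ _)
      exact Finset.mem_erase.mpr ⟨huv, hu⟩
  exact absurd (lt_of_le_of_lt hle (max_lt h1 h2)) (lt_irrefl _)

lemma card3 {a b c : ℕ} (h1 : a ≠ b) (h2 : a ≠ c) (h3 : b ≠ c) :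
    ({a, b, c} : Finset ℕ).card = 3 := by
  rw [Finset.card_insert_of_notMem (by simp [h1, h2]),
    Finset.card_insert_of_notMem (by simp [h3]), Finset.card_singleton]

lemma no_cross_edge (t : ℕ) (ht : 3 ≤ t) (G : HyperGraph)
    (hfree : G.Free (linearCycle t)) (A : Finset ℕ) (hA : A ⊆ G.verts)
    (φ : ℕ → ℕ) (hφi : Set.InjOn φ ↑(Finset.Icc 1 (2*t-2)))
    (hφA : ∀ m ∈ Finset.Icc 1 (2*t-2), φ m ∈ A)
    (hφe : ∀ S ∈ (completeMinus (2*t-2)).edges, S.image φ ∈ G.edges)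
    (x x' y y' c : ℕ)
    (hxA : x ∉ A) (hx'A : x' ∉ A) (hyA : y ∉ A) (hy'A : y' ∉ A) (hcA : c ∉ A)
    (hx'v : x' ∈ G.verts) (hy'v : y' ∈ G.verts)
    (d1 : x ≠ x') (d2 : x ≠ y) (d3 : x ≠ y') (d4 : x ≠ c) (d5 : x' ≠ y)
    (d6 : x' ≠ y') (d7 : x' ≠ c) (d8 : y ≠ y') (d9 : y ≠ c) (d10 : y' ≠ c)
    (hxe : ∀ k ∈ A, ({x, k, x'} : Finset ℕ) ∈ G.edges)
    (hye : ∀ k ∈ A, ({y, k, y'} : Finset ℕ) ∈ G.edges)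
    (he : ({x, c, y} : Finset ℕ) ∈ G.edges) : False := by
  have d1' := d1.symm; have d2' := d2.symm; have d3' := d3.symm; have d4' := d4.symm
  have d5' := d5.symm; have d6' := d6.symm; have d7' := d7.symm; have d8' := d8.symm
  have d9' := d9.symm; have d10' := d10.symm
  apply hfree
  have hxv : x ∈ G.verts := G.edge_sub _ he (by simp)
  have hcv : c ∈ G.verts := G.edge_sub _ he (by simp)
  have hyv : y ∈ G.verts := G.edge_sub _ he (by simp)
  set f : ℕ → ℕ := fun m => if m = 1 then x else if m = 2 then c else if m = 3 then y
    else if m = 4 then y' else if m = 2*t then x' else φ (m - 3) with hfdef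
  have hf1 : f 1 = x := by norm_num [hfdef]
  have hf2 : f 2 = c := by norm_num [hfdef]
  have hf3 : f 3 = y := by norm_num [hfdef]
  have hf4 : f 4 = y' := by norm_num [hfdef]
  have hf2t : f (2*t) = x' := by
    simp only [hfdef]
    rw [if_neg (by omega), if_neg (by omega), if_neg (by omega), if_neg (by omega)]
    simp
  have hfφ : ∀ m, 5 ≤ m → m ≤ 2*t - 1 → f m = φ (m - 3) := by
    intro m h5 h9
    simp only [hfdef]
    rw [if_neg (by omega), if_neg (by omega), if_neg (by omega), if_neg (by omega),
      if_neg (by omega)]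
  have hmemA : ∀ m, 5 ≤ m → m ≤ 2*t-1 → f m ∈ A := by
    intro m h5 h9
    rw [hfφ m h5 h9]
    exact hφA _ (Finset.mem_Icc.mpr ⟨by omega, by omega⟩)
  refine ⟨f, ?_, ?_, ?_⟩
  · -- injectivity
    intro m hm n hn h
    rw [show (linearCycle t).verts = Finset.Icc 1 (2*t) from rfl, Finset.coe_Icc,
      Set.mem_Icc] at hm hn
    by_cases pm : m = 1 ∨ m = 2 ∨ m = 3 ∨ m = 4 ∨ m = 2*t
    · by_cases pn : n = 1 ∨ n = 2 ∨ n = 3 ∨ n = 4 ∨ n = 2*t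
      · rcases pm with rfl|rfl|rfl|rfl|rfl <;> rcases pn with rfl|rfl|rfl|rfl|rfl <;>
          simp only [hf1, hf2, hf3, hf4, hf2t] at h <;>
          first | omega | (exact absurd h (by tauto))
      · push_neg at pn
        have hnA : f n ∈ A := hmemA n (by omega) (by omega)
        rcases pm with rfl|rfl|rfl|rfl|rfl <;>
          simp only [hf1, hf2, hf3, hf4, hf2t] at h <;> rw [← h] at hnA <;>
          first | exact absurd hnA hxA | exact absurd hnA hcA | exact absurd hnA hyA |
            exact absurd hnA hy'A | exact absurd hnA hx'A
    · push_neg at pm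
      have hmA : f m ∈ A := hmemA m (by omega) (by omega)
      by_cases pn : n = 1 ∨ n = 2 ∨ n = 3 ∨ n = 4 ∨ n = 2*t
      · rcases pn with rfl|rfl|rfl|rfl|rfl <;>
          simp only [hf1, hf2, hf3, hf4, hf2t] at h <;> rw [h] at hmA <;>
          first | exact absurd hmA hxA | exact absurd hmA hcA | exact absurd hmA hyA |
            exact absurd hmA hy'A | exact absurd hmA hx'A
      · push_neg at pn
        rw [hfφ m (by omega) (by omega), hfφ n (by omega) (by omega)] at h
        have := hφi (Finset.mem_coe.mpr (Finset.mem_Icc.mpr ⟨by omega, by omega⟩))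
          (Finset.mem_coe.mpr (Finset.mem_Icc.mpr ⟨by omega, by omega⟩)) h
        omega
  · -- maps into verts
    intro m hmv
    rw [show (linearCycle t).verts = Finset.Icc 1 (2*t) from rfl, Finset.mem_Icc] at hmv
    by_cases pm : m = 1 ∨ m = 2 ∨ m = 3 ∨ m = 4 ∨ m = 2*t
    · rcases pm with rfl|rfl|rfl|rfl|rfl <;>
        simp only [hf1, hf2, hf3, hf4, hf2t] <;> assumption
    · push_neg at pm
      exact hA (hmemA m (by omega) (by omega))
  · -- edges
    intro e hee
    have h2 := (Finset.mem_filter.mp hee).2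
    rcases h2 with ⟨k, hk, rfl⟩ | rfl
    · rw [Finset.image_insert, Finset.image_insert, Finset.image_singleton]
      rcases Nat.lt_or_ge k 1 with hk0 | hk1
      · have hk0' : k = 0 := by omega
        subst hk0'
        norm_num
        rw [hf1, hf2, hf3]
        exact he
      rcases Nat.lt_or_ge k 2 with hk1' | hk2
      · have : k = 1 := by omega
        subst this
        norm_num
        rw [hf3, hf4, hfφ 5 (by omega) (by omega)]
        have hmem2 : φ (5 - 3) ∈ A := hφA _ (Finset.mem_Icc.mpr ⟨by omega, by omega⟩)
        have hperm : ({y, y', φ (5-3)} : Finset ℕ) = {y, φ (5-3), y'} := by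
          ext z; simp; tauto
        rw [hperm]
        exact hye _ hmem2
      · -- 2 ≤ k < t - 1
        rw [hfφ (2*k+1) (by omega) (by omega), hfφ (2*k+2) (by omega) (by omega),
          hfφ (2*k+3) (by omega) (by omega)]
        have hS : ({2*k+1-3, 2*k+2-3, 2*k+3-3} : Finset ℕ) ∈ (completeMinus (2*t-2)).edges := by
          refine Finset.mem_filter.mpr ⟨Finset.mem_powersetCard.mpr ⟨?_, ?_⟩, ?_⟩
          · intro z hz
            simp only [Finset.mem_insert, Finset.mem_singleton] at hz
            rw [Finset.mem_Icc]
            rcases hz with rfl | rfl | rfl <;> omega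
          · exact card3 (by omega) (by omega) (by omega)
          · intro hSeq
            have hx3 : (2*k+3-3) ∈ ({1, 2, 3} : Finset ℕ) := by
              rw [← hSeq]; simp
            simp only [Finset.mem_insert, Finset.mem_singleton] at hx3
            omega
        have := hφe _ hS
        rw [Finset.image_insert, Finset.image_insert, Finset.image_singleton] at this
        exact this
    · rw [Finset.image_insert, Finset.image_insert, Finset.image_singleton, hf1,
        hfφ (2*t-1) (by omega) (by omega)]
      have h2tt : f (2*t) = x' := hf2t
      rw [h2tt]
      have hmem2 : φ (2*t-1-3) ∈ A := hφA _ (Finset.mem_Icc.mpr ⟨by omega, by omega⟩)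
      have hperm : ({φ (2*t-1-3), x', x} : Finset ℕ) = {x, φ (2*t-1-3), x'} := by
        ext z; simp; tauto
      rw [hperm]
      exact hxe _ hmem2

lemma perm_swap23 (p q r : ℕ) : ({p, q, r} : Finset ℕ) = {p, r, q} := by
  ext u; simp; tauto

lemma perm_cyc (p q r : ℕ) : ({p, q, r} : Finset ℕ) = {q, r, p} := by
  ext u; simp; tauto

lemma perm_cyc2 (p q r : ℕ) : ({p, q, r} : Finset ℕ) = {r, p, q} := by
  ext u; simp; tauto

lemma perm_rev (p q r : ℕ) : ({p, q, r} : Finset ℕ) = {r, q, p} := by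
  ext u; simp; tauto

set_option maxHeartbeats 1000000 in
lemma cross_edge (t : ℕ) (ht : 3 ≤ t) (G : HyperGraph)
    (h3 : G.IsUniform 3) (hd : G.IsDense) (hfree : G.Free (linearCycle t))
    (A : Finset ℕ) (s : ℕ) (a b : ℕ → ℕ) (hpart : G.GoodPartition A s a b)
    (φ : ℕ → ℕ) (hφi : Set.InjOn φ ↑(Finset.Icc 1 (2*t-2)))
    (hφA : ∀ m ∈ Finset.Icc 1 (2*t-2), φ m ∈ A)
    (hφe : ∀ S ∈ (completeMinus (2*t-2)).edges, S.image φ ∈ G.edges)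
    (i j : ℕ) (hi : i ∈ Finset.Icc 1 s) (hj : j ∈ Finset.Icc 1 s) (hij : i ≠ j)
    (x x' y y' : ℕ)
    (hxi : x = a i ∧ x' = b i ∨ x = b i ∧ x' = a i)
    (hyj : y = a j ∧ y' = b j ∨ y = b j ∧ y' = a j) :
    ({x, y, x'} : Finset ℕ) ∈ G.edges ∨ ({x, y, y'} : Finset ℕ) ∈ G.edges := by
  obtain ⟨hAsub, hcover, hdisj, hgood⟩ := hpart
  have gpi := hgood i hi
  have gpj := hgood j hj
  -- disjointness of pairs i and j
  have hdis : ∀ u, u ∈ ({a i, b i} : Finset ℕ) → u ∉ ({a j, b j} : Finset ℕ) := by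
    intro u h1 h2
    have hu : u ∈ (∅ : Finset ℕ) := hdisj i hi j hj hij ▸ Finset.mem_inter.mpr ⟨h1, h2⟩
    simp at hu
  have naa : a i ≠ a j := fun h => hdis (a i) (by simp) (by simp [h])
  have nab : a i ≠ b j := fun h => hdis (a i) (by simp) (by simp [h])
  have nba : b i ≠ a j := fun h => hdis (b i) (by simp) (by simp [h])
  have nbb : b i ≠ b j := fun h => hdis (b i) (by simp) (by simp [h])
  have hxv : x ∈ G.verts := by rcases hxi with ⟨rfl, _⟩ | ⟨rfl, _⟩
                               exacts [gpi.2.1, gpi.2.2.1]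
  have hx'v : x' ∈ G.verts := by rcases hxi with ⟨_, rfl⟩ | ⟨_, rfl⟩
                                 exacts [gpi.2.2.1, gpi.2.1]
  have hyv : y ∈ G.verts := by rcases hyj with ⟨rfl, _⟩ | ⟨rfl, _⟩
                               exacts [gpj.2.1, gpj.2.2.1]
  have hy'v : y' ∈ G.verts := by rcases hyj with ⟨_, rfl⟩ | ⟨_, rfl⟩
                                 exacts [gpj.2.2.1, gpj.2.1]
  have hxA : x ∉ A := by rcases hxi with ⟨rfl, _⟩ | ⟨rfl, _⟩
                         exacts [gpi.2.2.2.1, gpi.2.2.2.2.1]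
  have hx'A : x' ∉ A := by rcases hxi with ⟨_, rfl⟩ | ⟨_, rfl⟩
                           exacts [gpi.2.2.2.2.1, gpi.2.2.2.1]
  have hyA : y ∉ A := by rcases hyj with ⟨rfl, _⟩ | ⟨rfl, _⟩
                         exacts [gpj.2.2.2.1, gpj.2.2.2.2.1]
  have hy'A : y' ∉ A := by rcases hyj with ⟨_, rfl⟩ | ⟨_, rfl⟩
                           exacts [gpj.2.2.2.2.1, gpj.2.2.2.1]
  have hxx' : x ≠ x' := by rcases hxi with ⟨rfl, rfl⟩ | ⟨rfl, rfl⟩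
                           exacts [gpi.1, gpi.1.symm]
  have hyy' : y ≠ y' := by rcases hyj with ⟨rfl, rfl⟩ | ⟨rfl, rfl⟩
                           exacts [gpj.1, gpj.1.symm]
  have hxy : x ≠ y := by rcases hxi with ⟨rfl, _⟩ | ⟨rfl, _⟩ <;>
                           rcases hyj with ⟨rfl, _⟩ | ⟨rfl, _⟩ <;> assumption
  have hxy' : x ≠ y' := by rcases hxi with ⟨rfl, _⟩ | ⟨rfl, _⟩ <;>
                             rcases hyj with ⟨_, rfl⟩ | ⟨_, rfl⟩ <;> assumption
  have hx'y : x' ≠ y := by rcases hxi with ⟨_, rfl⟩ | ⟨_, rfl⟩ <;>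
                             rcases hyj with ⟨rfl, _⟩ | ⟨rfl, _⟩ <;> assumption
  have hx'y' : x' ≠ y' := by rcases hxi with ⟨_, rfl⟩ | ⟨_, rfl⟩ <;>
                               rcases hyj with ⟨_, rfl⟩ | ⟨_, rfl⟩ <;> assumption
  have hxe : ∀ k ∈ A, ({x, k, x'} : Finset ℕ) ∈ G.edges := by
    intro k hk
    rcases hxi with ⟨rfl, rfl⟩ | ⟨rfl, rfl⟩
    · have hl := (gpi.2.2.2.2.2 k hk).1
      have hb : b i ∈ G.link2 (a i) k := by rw [hl]; exact Set.mem_singleton _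
      exact hb
    · have hl := (gpi.2.2.2.2.2 k hk).2
      have hb : a i ∈ G.link2 (b i) k := by rw [hl]; exact Set.mem_singleton _
      exact hb
  have hye : ∀ k ∈ A, ({y, k, y'} : Finset ℕ) ∈ G.edges := by
    intro k hk
    rcases hyj with ⟨rfl, rfl⟩ | ⟨rfl, rfl⟩
    · have hl := (gpj.2.2.2.2.2 k hk).1
      have hb : b j ∈ G.link2 (a j) k := by rw [hl]; exact Set.mem_singleton _
      exact hb
    · have hl := (gpj.2.2.2.2.2 k hk).2
      have hb : a j ∈ G.link2 (b j) k := by rw [hl]; exact Set.mem_singleton _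
      exact hb
  -- cover the pair {x, y}
  obtain ⟨e, hee, hxe', hye'⟩ := exists_cover G hd hxv hyv hxy
  have hye2 : y ∈ e.erase x := Finset.mem_erase.mpr ⟨hxy.symm, hye'⟩
  have hc1 : ((e.erase x).erase y).card = 1 := by
    rw [Finset.card_erase_of_mem hye2, Finset.card_erase_of_mem hxe', h3 e hee]
  obtain ⟨z, hz⟩ := Finset.card_eq_one.mp hc1
  have hzmem : z ∈ (e.erase x).erase y := hz ▸ Finset.mem_singleton_self z
  have hzy : z ≠ y := (Finset.mem_erase.mp hzmem).1
  have hzx : z ≠ x := (Finset.mem_erase.mp (Finset.mem_of_mem_erase hzmem)).1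
  have hze : z ∈ e := Finset.mem_of_mem_erase (Finset.mem_of_mem_erase hzmem)
  have heq : e = ({x, y, z} : Finset ℕ) := by
    refine (Finset.eq_of_subset_of_card_le ?_ ?_).symm
    · intro u hu
      simp only [Finset.mem_insert, Finset.mem_singleton] at hu
      rcases hu with rfl | rfl | rfl
      exacts [hxe', hye', hze]
    · rw [h3 e hee, card3 hxy hzx.symm hzy.symm]
  have hzv : z ∈ G.verts := G.edge_sub e hee hze
  by_cases hzA : z ∈ A
  · -- impossible: link forces y to be the partner of x
    exfalso
    have hedge : ({x, z, y} : Finset ℕ) ∈ G.edges := by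
      have : ({x, z, y} : Finset ℕ) = e := by rw [heq]; ext u; simp; tauto
      rw [this]; exact hee
    rcases hxi with ⟨rfl, hx'⟩ | ⟨rfl, hx'⟩
    · have hl := (gpi.2.2.2.2.2 z hzA).1
      have : y ∈ G.link2 (a i) z := hedge
      rw [hl] at this
      exact hx'y (by rw [hx']; exact this.symm)
    · have hl := (gpi.2.2.2.2.2 z hzA).2
      have : y ∈ G.link2 (b i) z := hedge
      rw [hl] at this
      exact hx'y (by rw [hx']; exact this.symm)
  · obtain ⟨k, hk, hzk⟩ := (hcover z).mp (Finset.mem_sdiff.mpr ⟨hzv, hzA⟩)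
    by_cases hki : k = i
    · subst hki
      have hzx' : z = x' := by
        rcases hxi with ⟨hx1, hx2⟩ | ⟨hx1, hx2⟩ <;> rcases hzk with h | h <;>
          first | (exact absurd (h.trans hx1.symm) hzx) | (exact h.trans hx2.symm)
      left
      have : ({x, y, x'} : Finset ℕ) = e := by rw [heq, hzx']
      rw [this]; exact hee
    · by_cases hkj : k = j
      · subst hkj
        have hzy' : z = y' := by
          rcases hyj with ⟨hy1, hy2⟩ | ⟨hy1, hy2⟩ <;> rcases hzk with h | h <;>
            first | (exact absurd (h.trans hy1.symm) hzy) | (exact h.trans hy2.symm)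
        right
        have : ({x, y, y'} : Finset ℕ) = e := by rw [heq, hzy']
        rw [this]; exact hee
      · -- z in a third pair: build a linear cycle, contradiction
        exfalso
        have gpk := hgood k hk
        have hdik : ∀ u, u ∈ ({a i, b i} : Finset ℕ) → u ∉ ({a k, b k} : Finset ℕ) := by
          intro u h1 h2
          have hu : u ∈ (∅ : Finset ℕ) :=
            hdisj i hi k hk (fun h => hki h.symm) ▸ Finset.mem_inter.mpr ⟨h1, h2⟩
          simp at hu
        have hdjk : ∀ u, u ∈ ({a j, b j} : Finset ℕ) → u ∉ ({a k, b k} : Finset ℕ) := by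
          intro u h1 h2
          have hu : u ∈ (∅ : Finset ℕ) :=
            hdisj j hj k hk (fun h => hkj h.symm) ▸ Finset.mem_inter.mpr ⟨h1, h2⟩
          simp at hu
        have hxz : x ≠ z := by
          intro h
          rcases hxi with ⟨rfl, _⟩ | ⟨rfl, _⟩ <;> rcases hzk with h2 | h2 <;>
            exact hdik z (by rw [← h]; simp) (by rw [h2]; simp)
        have hx'z : x' ≠ z := by
          intro h
          rcases hxi with ⟨_, rfl⟩ | ⟨_, rfl⟩ <;> rcases hzk with h2 | h2 <;>
            exact hdik z (by rw [← h]; simp) (by rw [h2]; simp)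
        have hyz : y ≠ z := by
          intro h
          rcases hyj with ⟨rfl, _⟩ | ⟨rfl, _⟩ <;> rcases hzk with h2 | h2 <;>
            exact hdjk z (by rw [← h]; simp) (by rw [h2]; simp)
        have hy'z : y' ≠ z := by
          intro h
          rcases hyj with ⟨_, rfl⟩ | ⟨_, rfl⟩ <;> rcases hzk with h2 | h2 <;>
            exact hdjk z (by rw [← h]; simp) (by rw [h2]; simp)
        have hedge : ({x, z, y} : Finset ℕ) ∈ G.edges := by
          have : ({x, z, y} : Finset ℕ) = e := by rw [heq]; ext u; simp; tauto
          rw [this]; exact hee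
        exact no_cross_edge t ht G hfree A hAsub φ hφi hφA hφe x x' y y' z
          hxA hx'A hyA hy'A hzA hx'v hy'v hxx' hxy hxy' hxz hx'y hx'y' hx'z
          hyy' hyz hy'z hxe hye hedge

end HyperGraph

set_option maxHeartbeats 1000000 in
/-- in the setting of a good graph to `A` whose induced graph `G[A]`
contains `K_{2t-2}^{3-}`, any two of the good pairs are comparable: either
`{a_i,b_i} ≥ {a_j,b_j}` or `{a_j,b_j} ≥ {a_i,b_i}`, where `{a,b} ≥ {c,d}` means both
`abc` and `abd` are edges. -/
theorem good_pairs_comparable (t : ℕ) (ht : 3 ≤ t) (G : HyperGraph)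
    (h3 : G.IsUniform 3) (hd : G.IsDense) (hfree : G.Free (linearCycle t))
    (A : Finset ℕ) (s : ℕ) (a b : ℕ → ℕ) (hpart : G.GoodPartition A s a b)
    (hKm : (G.induce A).HasCopy (completeMinus (2 * t - 2)))
    (i j : ℕ) (hi : i ∈ Finset.Icc 1 s) (hj : j ∈ Finset.Icc 1 s) (hij : i ≠ j) :
    (({a i, b i, a j} : Finset ℕ) ∈ G.edges ∧
        ({a i, b i, b j} : Finset ℕ) ∈ G.edges) ∨
      (({a j, b j, a i} : Finset ℕ) ∈ G.edges ∧
        ({a j, b j, b i} : Finset ℕ) ∈ G.edges) := by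
  obtain ⟨φ, hφi, hφv, hφe0⟩ := hKm
  have hφi' : Set.InjOn φ ↑(Finset.Icc 1 (2*t-2)) := hφi
  have hφA : ∀ m ∈ Finset.Icc 1 (2*t-2), φ m ∈ A := fun m hm => hφv m hm
  have hφe : ∀ S ∈ (completeMinus (2*t-2)).edges, S.image φ ∈ G.edges :=
    fun S hS => (Finset.mem_filter.mp (hφe0 S hS)).1
  have H1 := cross_edge t ht G h3 hd hfree A s a b hpart φ hφi' hφA hφe i j hi hj hij
    (a i) (b i) (a j) (b j) (Or.inl ⟨rfl, rfl⟩) (Or.inl ⟨rfl, rfl⟩)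
  have H2 := cross_edge t ht G h3 hd hfree A s a b hpart φ hφi' hφA hφe i j hi hj hij
    (b i) (a i) (b j) (a j) (Or.inr ⟨rfl, rfl⟩) (Or.inr ⟨rfl, rfl⟩)
  have H3 := cross_edge t ht G h3 hd hfree A s a b hpart φ hφi' hφA hφe i j hi hj hij
    (a i) (b i) (b j) (a j) (Or.inl ⟨rfl, rfl⟩) (Or.inr ⟨rfl, rfl⟩)
  have H4 := cross_edge t ht G h3 hd hfree A s a b hpart φ hφi' hφA hφe i j hi hj hij
    (b i) (a i) (a j) (b j) (Or.inr ⟨rfl, rfl⟩) (Or.inl ⟨rfl, rfl⟩)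
  rw [perm_swap23 (a i) (a j) (b i), perm_cyc (a i) (a j) (b j)] at H1
  rw [perm_cyc2 (b i) (b j) (a i), perm_rev (b i) (b j) (a j)] at H2
  rw [perm_swap23 (a i) (b j) (b i), perm_rev (a i) (b j) (a j)] at H3
  rw [perm_cyc2 (b i) (a j) (a i), perm_cyc (b i) (a j) (b j)] at H4
  rcases H1 with h1 | h1 <;> rcases H2 with h2 | h2 <;> rcases H3 with h3 | h3 <;>
    rcases H4 with h4 | h4 <;>
    first
    | exact Or.inl ⟨h1, h2⟩
    | exact Or.inl ⟨h1, h3⟩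
    | exact Or.inl ⟨h4, h2⟩
    | exact Or.inl ⟨h4, h3⟩
    | exact Or.inr ⟨h1, h4⟩
    | exact Or.inr ⟨h1, h2⟩
    | exact Or.inr ⟨h3, h4⟩
    | exact Or.inr ⟨h3, h2⟩
end

section
/- Let t ≥ 4 and let G be a dense, C_t^3-free 3-graph such that [2t−2] ⊆ V(G) and every 3-element subset of [2t−2] except {1,2,3} is an edge of G. If a, b are distinct vertices in V(G)∖[2t−2] such that {a,b,i} ∈ E(G) for some i ∈ [2t−2], then either {a,b} is a good pair to [2t−2], or N(a,k) = N(b,k) = {i} for every k ∈ [2t−2]∖{i}. -/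
open Finset

open HyperGraph

/-!
A dense 3-graph covers every pair of vertices: if no edge contained both `u` and `v`, the
Lagrangian polynomial would be affine along the segment that moves weight between `u` and `v`,
so `λ(G)` would be attained with `u` or `v` deleted.

Call `A = [2t-2]`. Two edges `v₁v₂v₃`, `v₃v₄v₅` meeting in one vertex, with `v₁, v₅ ∈ A` and at
most three of the five vertices in `A`, close up into a `C_t^3` through `2t - 5` further
vertices of `A`, because every 3-subset of `A` but `123` is an edge and the path can be routed
around `123`. Given the edge `abi`, excluding these configurations gives `N(a,k) ⊆ {b,i}` for
`k ∈ A ∖ {i}` and rules out every edge `aik`; density then forces `N(a,k) = {b}` for all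
`k ∈ A`, and symmetrically `N(b,k) = {a}`. So `{a,b}` is always a good pair.
-/

namespace HyperGraph

section Lagrangian

variable (G : HyperGraph)

lemma lagrangianAt_le_card_edges {w : ℕ → ℝ} (hw : G.IsWeighting w) :
    G.lagrangianAt w ≤ G.edges.card := by
  have hw_le_one : ∀ i ∈ G.verts, w i ≤ 1 := fun i hi =>
    hw.2 ▸ Finset.single_le_sum (fun j _ => hw.1 j) hi
  calc G.lagrangianAt w ≤ ∑ _e ∈ G.edges, (1 : ℝ) :=
        Finset.sum_le_sum fun e he =>
          Finset.prod_le_one (fun i _ => hw.1 i) fun i hi => hw_le_one i (G.edge_sub e he hi)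
    _ = G.edges.card := by simp

lemma lagrangianAt_le_lagrangian {w : ℕ → ℝ} (hw : G.IsWeighting w) :
    G.lagrangianAt w ≤ G.lagrangian :=
  le_csSup ⟨G.edges.card, by rintro _ ⟨w, hw, rfl⟩; exact G.lagrangianAt_le_card_edges hw⟩
    ⟨w, hw, rfl⟩

lemma isWeighting_single {u : ℕ} (hu : u ∈ G.verts) : G.IsWeighting (Pi.single u 1) :=
  ⟨fun i => by by_cases h : i = u <;> simp [h], by simp [hu]⟩

def eraseVert (v : ℕ) : HyperGraph := G.induce (G.verts.erase v)

lemma eraseVert_isProperSubgraph {v : ℕ} (hv : v ∈ G.verts) :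
    (G.eraseVert v).IsProperSubgraph G :=
  ⟨⟨Finset.erase_subset _ _, Finset.filter_subset _ _⟩, fun h => Finset.notMem_erase v G.verts
    (by rw [show G.verts.erase v = G.verts from congrArg HyperGraph.verts h]; exact hv)⟩

lemma lagrangianAt_le_lagrangian_eraseVert {w : ℕ → ℝ} (hw : G.IsWeighting w) {v : ℕ}
    (hwv : w v = 0) : G.lagrangianAt w ≤ (G.eraseVert v).lagrangian := by
  classical
  have hw' : (G.eraseVert v).IsWeighting w := ⟨hw.1, (Finset.sum_erase _ hwv).trans hw.2⟩
  refine le_of_eq_of_le ?_ ((G.eraseVert v).lagrangianAt_le_lagrangian hw')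
  refine (Finset.sum_filter_of_ne fun e he hprod => ?_).symm
  exact Finset.subset_erase.mpr ⟨G.edge_sub e he, fun hve => hprod (Finset.prod_eq_zero hve hwv)⟩

end Lagrangian

section MoveWeight

variable {w : ℕ → ℝ} {u v : ℕ} {e : Finset ℕ}

def moveWeight (w : ℕ → ℝ) (v u : ℕ) : ℕ → ℝ :=
  Function.update (Function.update w v 0) u (w u + w v)

lemma moveWeight_apply_source (huv : u ≠ v) : moveWeight w v u v = 0 := by
  simp [moveWeight, huv.symm]

lemma isWeighting_moveWeight {G : HyperGraph} (hw : G.IsWeighting w) (hu : u ∈ G.verts)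
    (hv : v ∈ G.verts) (huv : u ≠ v) : G.IsWeighting (moveWeight w v u) := by
  classical
  refine ⟨fun i => ?_, ?_⟩
  · unfold moveWeight
    rcases eq_or_ne i u with rfl | hiu
    · simpa using add_nonneg (hw.1 i) (hw.1 v)
    · rw [Function.update_of_ne hiu]
      rcases eq_or_ne i v with rfl | hiv
      · simp
      · rw [Function.update_of_ne hiv]; exact hw.1 i
  · have hv' : v ∈ G.verts \ {u} := by simp [hv, huv.symm]
    rw [moveWeight, Finset.sum_update_of_mem hu, Finset.sum_update_of_mem hv', ← hw.2,
      Finset.sum_eq_add_sum_sdiff_singleton_of_mem hu w,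
      Finset.sum_eq_add_sum_sdiff_singleton_of_mem hv' w]
    ring

lemma prod_moveWeight_of_notMem (hu : u ∉ e) (hv : v ∉ e) :
    ∏ i ∈ e, moveWeight w v u i = ∏ i ∈ e, w i := by
  classical
  rw [moveWeight, Finset.prod_update_of_notMem hu, Finset.prod_update_of_notMem hv]

lemma prod_moveWeight_of_target_mem (hu : u ∈ e) (hv : v ∉ e) :
    ∏ i ∈ e, moveWeight w v u i = (w u + w v) * ∏ i ∈ e \ {u}, w i := by
  classical
  rw [moveWeight, Finset.prod_update_of_mem hu,
    Finset.prod_update_of_notMem fun h => hv (Finset.mem_sdiff.mp h).1]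

lemma prod_moveWeight_of_source_mem (hu : u ∉ e) (hv : v ∈ e) :
    ∏ i ∈ e, moveWeight w v u i = 0 := by
  classical
  rw [moveWeight, Finset.prod_update_of_notMem hu, Finset.prod_update_of_mem hv, zero_mul]

lemma prod_moveWeight_add (huv : ¬ (u ∈ e ∧ v ∈ e)) :
    w u * ∏ i ∈ e, moveWeight w v u i + w v * ∏ i ∈ e, moveWeight w u v i =
      (w u + w v) * ∏ i ∈ e, w i := by
  classical
  by_cases hu : u ∈ e
  · have hv : v ∉ e := fun hv => huv ⟨hu, hv⟩
    rw [prod_moveWeight_of_target_mem hu hv, prod_moveWeight_of_source_mem hv hu,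
      Finset.prod_eq_mul_prod_sdiff_singleton_of_mem hu w]
    ring
  by_cases hv : v ∈ e
  · rw [prod_moveWeight_of_source_mem hu hv, prod_moveWeight_of_target_mem hv hu,
      Finset.prod_eq_mul_prod_sdiff_singleton_of_mem hv w]
    ring
  rw [prod_moveWeight_of_notMem hu hv, prod_moveWeight_of_notMem hv hu]
  ring

end MoveWeight

variable {G : HyperGraph}

/-- With no edge through both `u` and `v`, `λ(G, w)` is the average, with weights `w u` and
`w v`, of its values after moving all weight onto `u` or all weight onto `v`. -/
lemma lagrangianAt_le_max_eraseVert {u v : ℕ} (hu : u ∈ G.verts)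
    (hv : v ∈ G.verts) (huv : u ≠ v) (hcov : ∀ e ∈ G.edges, ¬ (u ∈ e ∧ v ∈ e))
    {w : ℕ → ℝ} (hw : G.IsWeighting w) :
    G.lagrangianAt w ≤ max (G.eraseVert u).lagrangian (G.eraseVert v).lagrangian := by
  set M := max (G.eraseVert u).lagrangian (G.eraseVert v).lagrangian
  have hmove_u : G.lagrangianAt (moveWeight w v u) ≤ M :=
    (G.lagrangianAt_le_lagrangian_eraseVert (isWeighting_moveWeight hw hu hv huv)
      (moveWeight_apply_source huv)).trans (le_max_right _ _)
  have hmove_v : G.lagrangianAt (moveWeight w u v) ≤ M :=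
    (G.lagrangianAt_le_lagrangian_eraseVert (isWeighting_moveWeight hw hv hu huv.symm)
      (moveWeight_apply_source huv.symm)).trans (le_max_left _ _)
  have hcomb : w u * G.lagrangianAt (moveWeight w v u) + w v * G.lagrangianAt (moveWeight w u v)
      = (w u + w v) * G.lagrangianAt w := by
    simp only [lagrangianAt, Finset.mul_sum, ← Finset.sum_add_distrib]
    exact Finset.sum_congr rfl fun e he => prod_moveWeight_add (hcov e he)
  rcases (add_nonneg (hw.1 u) (hw.1 v)).eq_or_lt with hzero | hpos
  · have hwu : w u = 0 := by linarith [hw.1 u, hw.1 v]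
    exact (G.lagrangianAt_le_lagrangian_eraseVert hw hwu).trans (le_max_left _ _)
  · refine le_of_mul_le_mul_left ?_ hpos
    calc (w u + w v) * G.lagrangianAt w = _ := hcomb.symm
      _ ≤ w u * M + w v * M :=
        add_le_add (mul_le_mul_of_nonneg_left hmove_u (hw.1 u))
          (mul_le_mul_of_nonneg_left hmove_v (hw.1 v))
      _ = (w u + w v) * M := by ring

theorem IsDense.exists_edge_mem_mem (hd : G.IsDense) {u v : ℕ}
    (hu : u ∈ G.verts) (hv : v ∈ G.verts) (huv : u ≠ v) : ∃ e ∈ G.edges, u ∈ e ∧ v ∈ e := by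
  by_contra! hcov
  have hlt : max (G.eraseVert u).lagrangian (G.eraseVert v).lagrangian < G.lagrangian :=
    max_lt (hd _ (G.eraseVert_isProperSubgraph hu)) (hd _ (G.eraseVert_isProperSubgraph hv))
  obtain ⟨_, ⟨w, hw, rfl⟩, hw_gt⟩ :=
    exists_lt_of_lt_csSup (by exact ⟨_, _, G.isWeighting_single hu, rfl⟩) hlt
  exact hw_gt.not_ge (lagrangianAt_le_max_eraseVert hu hv huv (fun e he h => hcov e he h.1 h.2) hw)

lemma IsUniform.ne_of_mem_edges (h3 : G.IsUniform 3) {x y z : ℕ}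
    (he : ({x, y, z} : Finset ℕ) ∈ G.edges) : x ≠ y ∧ x ≠ z ∧ y ≠ z := by
  have hcard := h3 _ he
  refine ⟨?_, ?_, ?_⟩ <;> rintro rfl <;> simp at hcard <;>
    exact absurd hcard (Finset.card_le_two.trans_lt (by norm_num)).ne

lemma IsUniform.exists_eq_insert_insert (h3 : G.IsUniform 3) {e : Finset ℕ} (he : e ∈ G.edges)
    {x y : ℕ} (hx : x ∈ e) (hy : y ∈ e) (hxy : x ≠ y) : ∃ c, e = {x, y, c} := by
  have hy' : y ∈ e.erase x := Finset.mem_erase.mpr ⟨hxy.symm, hy⟩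
  obtain ⟨c, hc⟩ : ∃ c, (e.erase x).erase y = {c} := by
    rw [← Finset.card_eq_one, Finset.card_erase_of_mem hy', Finset.card_erase_of_mem hx, h3 e he]
  exact ⟨c, by rw [← hc, Finset.insert_erase hy', Finset.insert_erase hx]⟩

lemma IsDense.link2_nonempty (hd : G.IsDense) (h3 : G.IsUniform 3) {x y : ℕ}
    (hx : x ∈ G.verts) (hy : y ∈ G.verts) (hxy : x ≠ y) : (G.link2 x y).Nonempty := by
  obtain ⟨e, he, hxe, hye⟩ := hd.exists_edge_mem_mem hx hy hxy
  obtain ⟨c, rfl⟩ := h3.exists_eq_insert_insert he hxe hye hxy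
  exact ⟨c, he⟩

inductive IsLinearPath (G : HyperGraph) : List ℕ → Prop
  | single (x : ℕ) : IsLinearPath G [x]
  | cons (x p y : ℕ) (L : List ℕ) :
      ({x, p, y} : Finset ℕ) ∈ G.edges → IsLinearPath G (y :: L) → IsLinearPath G (x :: p :: y :: L)

lemma IsLinearPath.triple_mem_edges {L : List ℕ} (hL : G.IsLinearPath L) :
    ∀ k, 2 * k + 2 < L.length →
      ({L.getD (2 * k) 0, L.getD (2 * k + 1) 0, L.getD (2 * k + 2) 0} : Finset ℕ) ∈ G.edges := by
  induction hL with
  | single x => intro k hk; simp at hk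
  | cons x p y L he _ ih =>
    rintro (_ | k) hk
    · exact he
    · simpa [Nat.mul_succ] using ih k (by simp at hk ⊢; omega)

theorem hasCopy_linearCycle_of_isLinearPath {t : ℕ} (ht : 2 ≤ t) {L : List ℕ}
    (hlen : L.length = 2 * t) (hnd : L.Nodup) (hL : G.IsLinearPath (L ++ [L.getD 0 0])) :
    G.HasCopy (linearCycle t) := by
  set C := L ++ [L.getD 0 0]
  have hCL : ∀ j < 2 * t, C.getD j 0 = L.getD j 0 := fun j hj =>
    List.getD_append _ _ _ _ (hlen ▸ hj)
  have hC_last : C.getD (2 * t) 0 = L.getD 0 0 := by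
    simp [C, hlen]
  have htri := hL.triple_mem_edges
  have hClen : C.length = 2 * t + 1 := by simp [C, hlen]
  refine ⟨fun j => L.getD (j - 1) 0, ?_, ?_, ?_⟩
  · intro x hx y hy hxy
    simp only [linearCycle, Finset.coe_Icc, Set.mem_Icc] at hx hy
    dsimp only at hxy
    rw [List.getD_eq_getElem _ _ (by omega), List.getD_eq_getElem _ _ (by omega),
      hnd.getElem_inj_iff] at hxy
    omega
  · intro v hv
    simp only [linearCycle, Finset.mem_Icc] at hv
    show L.getD (v - 1) 0 ∈ G.verts
    obtain ⟨k, hk⟩ : ∃ k, v - 1 = 2 * k ∨ v - 1 = 2 * k + 1 := ⟨(v - 1) / 2, by omega⟩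
    refine G.edge_sub _ (htri k (by omega)) ?_
    rcases hk with hk | hk <;> rw [← hCL _ (by omega), hk] <;> simp
  · intro e he
    obtain ⟨-, ⟨k, hk, rfl⟩ | rfl⟩ := Finset.mem_filter.mp he
    · have := htri k (by omega)
      simp only [Finset.image_insert, Finset.image_singleton]
      rwa [hCL _ (by omega), hCL _ (by omega), hCL _ (by omega)] at this
    · simp only [Finset.image_insert, Finset.image_singleton]
      rw [show 2 * t - 1 - 1 = 2 * (t - 1) by omega, show 2 * t - 1 = 2 * (t - 1) + 1 by omega,
        Nat.sub_self, ← hC_last, ← hCL (2 * (t - 1)) (by omega),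
        ← hCL (2 * (t - 1) + 1) (by omega), show 2 * t = 2 * (t - 1) + 2 by omega]
      exact htri (t - 1) (by omega)

theorem exists_isLinearPath {A T : Finset ℕ} (hT : T.card ≤ 3)
    (hK : ∀ e ⊆ A, e.card = 3 → e ≠ T → e ∈ G.edges) :
    ∀ (m : ℕ) {P : Finset ℕ} {x y : ℕ}, P.card = 2 * m + 1 → P ⊆ A → x ∈ A → y ∈ A → x ≠ y →
      x ∉ P → y ∉ P → ¬ (x ∈ T ∧ y ∈ T ∧ P ⊆ T) →
      ∃ R : List ℕ, R.Nodup ∧ R.toFinset = P ∧ G.IsLinearPath (x :: R ++ [y]) := by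
  have hedge : ∀ {x p q : ℕ}, x ∈ A → p ∈ A → q ∈ A → x ≠ p → x ≠ q → p ≠ q →
      ¬ (x ∈ T ∧ p ∈ T ∧ q ∈ T) → ({x, p, q} : Finset ℕ) ∈ G.edges := by
    intro x p q hx hp hq hxp hxq hpq hT
    refine hK _ ?_ (Finset.card_eq_three.mpr ⟨x, p, q, hxp, hxq, hpq, rfl⟩) ?_
    · simp [Finset.insert_subset_iff, hx, hp, hq]
    · rintro rfl; simp at hT
  intro m
  induction m with
  | zero =>
    intro P x y hP hPA hx hy hxy hxP hyP hxyP
    obtain ⟨p, rfl⟩ := Finset.card_eq_one.mp hP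
    simp only [Finset.mem_singleton, Finset.singleton_subset_iff] at hxP hyP hPA hxyP
    refine ⟨[p], List.nodup_singleton p, by simp, .cons x p y [] ?_ (.single y)⟩
    exact hedge hx hPA hy hxP hxy (Ne.symm hyP) (by tauto)
  | succ m ih =>
    intro P x y hP hPA hx hy hxy hxP hyP _
    have step : ∀ q ∈ P, ∀ p ∈ P, p ≠ q → (q ∉ T ∨ (x ∉ T ∧ y ∉ T)) →
        ∃ R : List ℕ, R.Nodup ∧ R.toFinset = P ∧ G.IsLinearPath (x :: R ++ [y]) := by
      intro q hq p hp hpq hqT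
      have hq' : q ∈ P.erase p := Finset.mem_erase.mpr ⟨hpq.symm, hq⟩
      obtain ⟨R, hRnd, hRP, hR⟩ := ih (P := (P.erase p).erase q) (x := q) (y := y)
        (by rw [Finset.card_erase_of_mem hq', Finset.card_erase_of_mem hp, hP]; rfl)
        ((Finset.erase_subset _ _).trans ((Finset.erase_subset _ _).trans hPA)) (hPA hq) hy
        (fun h => hyP (h ▸ hq)) (Finset.notMem_erase _ _)
        (fun h => hyP (Finset.mem_of_mem_erase (Finset.mem_of_mem_erase h))) (by tauto)
      have hpR : p ∉ R := fun h => by simpa [hRP] using List.mem_toFinset.mpr h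
      have hqR : q ∉ R := fun h => by simpa [hRP] using List.mem_toFinset.mpr h
      refine ⟨p :: q :: R, ?_, ?_, .cons x p q (R ++ [y]) ?_ hR⟩
      · simp [hpq, hpR, hqR, hRnd]
      · simp [hRP, Finset.insert_erase hq', Finset.insert_erase hp]
      · exact hedge hx (hPA hp) (hPA hq) (fun h => hxP (h ▸ hp)) (fun h => hxP (h ▸ hq)) hpq
          (by tauto)
    -- the next end `q` is taken outside `T`; if there is none, `P = T` and both ends avoid `T`
    by_cases hPT : P ⊆ T
    · have hPeq : P = T := Finset.eq_of_subset_of_card_le hPT (by omega)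
      obtain ⟨q, hq⟩ := Finset.card_pos.mp (by omega : 0 < P.card)
      obtain ⟨p, hp, hpq⟩ := Finset.exists_mem_ne (by omega : 1 < P.card) q
      exact step q hq p hp hpq (.inr ⟨hPeq ▸ hxP, hPeq ▸ hyP⟩)
    · obtain ⟨q, hq, hqT⟩ := Finset.not_subset.mp hPT
      obtain ⟨p, hp, hpq⟩ := Finset.exists_mem_ne (by omega : 1 < P.card) q
      exact step q hq p hp hpq (.inl hqT)

/-- The conditions `v₂ ∉ A` and `v₃ ∉ A ∨ v₄ ∉ A` leave at most three of the five vertices in `A`,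
hence `2t - 5` others to close a `C_t^3` through `A`. -/
def IsAnchoredTwoPath (G : HyperGraph) (A : Finset ℕ) (v₁ v₂ v₃ v₄ v₅ : ℕ) : Prop :=
  ({v₁, v₂, v₃} : Finset ℕ) ∈ G.edges ∧ ({v₃, v₄, v₅} : Finset ℕ) ∈ G.edges ∧
    v₁ ≠ v₄ ∧ v₁ ≠ v₅ ∧ v₂ ≠ v₄ ∧ v₁ ∈ A ∧ v₅ ∈ A ∧ v₂ ∉ A ∧ (v₃ ∉ A ∨ v₄ ∉ A)

lemma IsAnchoredTwoPath.card_inter_le {A : Finset ℕ} {v₁ v₂ v₃ v₄ v₅ : ℕ}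
    (h : G.IsAnchoredTwoPath A v₁ v₂ v₃ v₄ v₅) : (A ∩ {v₁, v₂, v₃, v₄, v₅}).card ≤ 3 := by
  obtain ⟨-, -, -, -, -, -, -, hv₂, hv₃ | hv₄⟩ := h
  · refine (Finset.card_le_card (t := {v₁, v₄, v₅}) fun x hx => ?_).trans Finset.card_le_three
    simp only [Finset.mem_inter, Finset.mem_insert, Finset.mem_singleton] at hx ⊢
    rcases hx with ⟨hxA, rfl | rfl | rfl | rfl | rfl⟩ <;> tauto
  · refine (Finset.card_le_card (t := {v₁, v₃, v₅}) fun x hx => ?_).trans Finset.card_le_three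
    simp only [Finset.mem_inter, Finset.mem_insert, Finset.mem_singleton] at hx ⊢
    rcases hx with ⟨hxA, rfl | rfl | rfl | rfl | rfl⟩ <;> tauto

theorem IsAnchoredTwoPath.hasCopy_linearCycle {A T : Finset ℕ} {t v₁ v₂ v₃ v₄ v₅ : ℕ}
    (h : G.IsAnchoredTwoPath A v₁ v₂ v₃ v₄ v₅) (ht : 4 ≤ t) (h3 : G.IsUniform 3)
    (hA : 2 * t - 2 ≤ A.card) (hT : T.card ≤ 3)
    (hK : ∀ e ⊆ A, e.card = 3 → e ≠ T → e ∈ G.edges) : G.HasCopy (linearCycle t) := by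
  have hAB := h.card_inter_le
  obtain ⟨he₁, he₂, h14, h15, h24, hv₁, hv₅, hv₂, -⟩ := h
  obtain ⟨h12, h13, h23⟩ := h3.ne_of_mem_edges he₁
  obtain ⟨h34, h35, h45⟩ := h3.ne_of_mem_edges he₂
  have h25 : v₂ ≠ v₅ := ne_of_mem_of_not_mem hv₅ hv₂ |>.symm
  set B : Finset ℕ := {v₁, v₂, v₃, v₄, v₅}
  obtain ⟨P, hPsub, hPcard⟩ := Finset.exists_subset_card_eq (s := A \ B) (n := 2 * (t - 3) + 1)
    (by have := Finset.card_sdiff_add_card_inter A B; omega)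
  have hPA : P ⊆ A := hPsub.trans Finset.sdiff_subset
  have hPB : ∀ x ∈ P, x ∉ B := fun x hx => (Finset.mem_sdiff.mp (hPsub hx)).2
  have hv₁P : v₁ ∉ P := fun h => hPB _ h (by simp [B])
  have hv₅P : v₅ ∉ P := fun h => hPB _ h (by simp [B])
  obtain ⟨R, hRnd, hRP, hR⟩ := exists_isLinearPath hT hK (t - 3) hPcard hPA hv₅ hv₁ h15.symm
    hv₅P hv₁P fun ⟨h5T, h1T, hPT⟩ => by
      have := Finset.card_le_card (Finset.insert_subset h5T (Finset.insert_subset h1T hPT))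
      rw [Finset.card_insert_of_notMem (by simp [h15.symm, hv₅P]),
        Finset.card_insert_of_notMem hv₁P] at this
      omega
  have hRB : ∀ x ∈ R, x ∉ B := fun x hx => hPB x (hRP ▸ List.mem_toFinset.mpr hx)
  have hRlen : R.length = 2 * (t - 3) + 1 := by rw [← List.toFinset_card_of_nodup hRnd, hRP, hPcard]
  refine hasCopy_linearCycle_of_isLinearPath (L := v₁ :: v₂ :: v₃ :: v₄ :: v₅ :: R) (by omega)
    (by simp only [List.length_cons, hRlen]; omega) ?_ (.cons _ _ _ _ he₁ (.cons _ _ _ _ he₂ hR))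
  have hvR : v₁ ∉ R ∧ v₂ ∉ R ∧ v₃ ∉ R ∧ v₄ ∉ R ∧ v₅ ∉ R := by
    refine ⟨?_, ?_, ?_, ?_, ?_⟩ <;> exact fun h => hRB _ h (by simp [B])
  simp [hRnd, hvR, h12, h13, h14, h15, h23, h24, h25, h34, h35, h45]

section LinksAtCrossingEdge

variable {G : HyperGraph} {A : Finset ℕ} {a b i : ℕ}

lemma mem_link2 {x y z : ℕ} : z ∈ G.link2 x y ↔ ({x, y, z} : Finset ℕ) ∈ G.edges := Iff.rfl

lemma link2_subset_pair (hno : ∀ v₁ v₂ v₃ v₄ v₅, ¬ G.IsAnchoredTwoPath A v₁ v₂ v₃ v₄ v₅)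
    (haA : a ∉ A) (hbA : b ∉ A) (hi : i ∈ A) (he : ({a, b, i} : Finset ℕ) ∈ G.edges)
    {k : ℕ} (hk : k ∈ A) (hki : k ≠ i) : G.link2 a k ⊆ {b, i} := by
  intro x hx
  by_contra! hxbi
  simp only [Set.mem_insert_iff, Set.mem_singleton_iff, not_or] at hxbi
  refine hno i b a x k ⟨?_, ?_, Ne.symm hxbi.2, hki.symm, Ne.symm hxbi.1, hi, hk, hbA, .inl haA⟩
  · rwa [Finset.insert_comm, Finset.pair_comm, Finset.insert_comm]
  · rwa [mem_link2, Finset.pair_comm] at hx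

lemma notMem_link2_self (h3 : G.IsUniform 3) (hd : G.IsDense)
    (hno : ∀ v₁ v₂ v₃ v₄ v₅, ¬ G.IsAnchoredTwoPath A v₁ v₂ v₃ v₄ v₅)
    (hAV : A ⊆ G.verts) (hA : 2 < A.card)
    (haA : a ∉ A) (hbA : b ∉ A) (hi : i ∈ A) (he : ({a, b, i} : Finset ℕ) ∈ G.edges)
    {k : ℕ} (hk : k ∈ A) (hki : k ≠ i) : k ∉ G.link2 a i := by
  intro hE
  rw [mem_link2] at hE
  obtain ⟨k', hk', hk'i, hk'k⟩ : ∃ k' ∈ A, k' ≠ i ∧ k' ≠ k := by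
    obtain ⟨k', hk', hk'k⟩ := Finset.exists_mem_ne (s := A.erase i) (by simp [hi]; omega) k
    exact ⟨k', Finset.mem_of_mem_erase hk', Finset.ne_of_mem_erase hk', hk'k⟩
  have hba : ({b, a, i} : Finset ℕ) ∈ G.edges := by rwa [Finset.insert_comm]
  obtain ⟨c, hc⟩ := hd.link2_nonempty h3 (G.edge_sub _ he (by simp)) (hAV hk')
    (ne_of_mem_of_not_mem hk' hbA).symm
  rw [mem_link2] at hc
  rcases link2_subset_pair hno hbA haA hi hba hk' hk'i hc with rfl | rfl
  · refine hno k' b c i k ⟨?_, hE, hk'i, hk'k, (ne_of_mem_of_not_mem hi hbA).symm, hk', hk, hbA,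
      .inl haA⟩
    rwa [Finset.insert_comm] at hc
  · refine hno k a c b k' ⟨?_, ?_, ne_of_mem_of_not_mem hk hbA, hk'k.symm,
      (h3.ne_of_mem_edges he).1, hk, hk', haA, .inr hbA⟩
    · rwa [Finset.pair_comm, Finset.insert_comm] at hE
    · rwa [Finset.pair_comm, Finset.insert_comm] at hc

lemma link2_eq_singleton_of_ne (h3 : G.IsUniform 3) (hd : G.IsDense)
    (hno : ∀ v₁ v₂ v₃ v₄ v₅, ¬ G.IsAnchoredTwoPath A v₁ v₂ v₃ v₄ v₅)
    (hAV : A ⊆ G.verts) (hA : 2 < A.card)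
    (haA : a ∉ A) (hbA : b ∉ A) (hi : i ∈ A) (he : ({a, b, i} : Finset ℕ) ∈ G.edges)
    {k : ℕ} (hk : k ∈ A) (hki : k ≠ i) : G.link2 a k = {b} := by
  have hsub : ∀ x ∈ G.link2 a k, x = b := fun x hx => by
    rcases link2_subset_pair hno haA hbA hi he hk hki hx with rfl | rfl
    · rfl
    · refine absurd ?_ (notMem_link2_self h3 hd hno hAV hA haA hbA hi he hk hki)
      rw [mem_link2, Finset.pair_comm]; exact hx
  obtain ⟨c, hc⟩ := hd.link2_nonempty h3 (G.edge_sub _ he (by simp)) (hAV hk)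
    (ne_of_mem_of_not_mem hk haA).symm
  exact Set.eq_singleton_iff_unique_mem.mpr ⟨hsub c hc ▸ hc, hsub⟩

lemma link2_eq_singleton_self (h3 : G.IsUniform 3) (hd : G.IsDense)
    (hno : ∀ v₁ v₂ v₃ v₄ v₅, ¬ G.IsAnchoredTwoPath A v₁ v₂ v₃ v₄ v₅)
    (hAV : A ⊆ G.verts) (hA : 2 < A.card)
    (haA : a ∉ A) (hbA : b ∉ A) (hi : i ∈ A) (he : ({a, b, i} : Finset ℕ) ∈ G.edges) :
    G.link2 a i = {b} := by
  refine Set.eq_singleton_iff_unique_mem.mpr ⟨by rwa [mem_link2, Finset.pair_comm],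
    fun x hx => ?_⟩
  have hix := (h3.ne_of_mem_edges hx).2.2
  by_cases hxA : x ∈ A
  · exact absurd hx (notMem_link2_self h3 hd hno hAV hA haA hbA hi he hxA hix.symm)
  by_contra hxb
  obtain ⟨k, hk, hki⟩ := Finset.exists_mem_ne (by omega : 1 < A.card) i
  have hbk : b ∈ G.link2 a k := by
    rw [link2_eq_singleton_of_ne h3 hd hno hAV hA haA hbA hi he hk hki]; rfl
  refine hno k b a x i ⟨?_, ?_, ne_of_mem_of_not_mem hk hxA, hki, Ne.symm hxb, hk, hi, hbA,
    .inl haA⟩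
  · rwa [mem_link2, Finset.pair_comm, Finset.insert_comm, Finset.pair_comm,
      Finset.insert_comm] at hbk
  · rwa [mem_link2, Finset.pair_comm] at hx

lemma link2_eq_singleton (h3 : G.IsUniform 3) (hd : G.IsDense)
    (hno : ∀ v₁ v₂ v₃ v₄ v₅, ¬ G.IsAnchoredTwoPath A v₁ v₂ v₃ v₄ v₅)
    (hAV : A ⊆ G.verts) (hA : 2 < A.card)
    (haA : a ∉ A) (hbA : b ∉ A) (hi : i ∈ A) (he : ({a, b, i} : Finset ℕ) ∈ G.edges)
    {k : ℕ} (hk : k ∈ A) : G.link2 a k = {b} := by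
  rcases eq_or_ne k i with rfl | hki
  · exact link2_eq_singleton_self h3 hd hno hAV hA haA hbA hk he
  · exact link2_eq_singleton_of_ne h3 hd hno hAV hA haA hbA hi he hk hki

lemma isGoodPair_of_mem_edges (h3 : G.IsUniform 3) (hd : G.IsDense)
    (hno : ∀ v₁ v₂ v₃ v₄ v₅, ¬ G.IsAnchoredTwoPath A v₁ v₂ v₃ v₄ v₅)
    (hAV : A ⊆ G.verts) (hA : 2 < A.card)
    (haA : a ∉ A) (hbA : b ∉ A) (hi : i ∈ A) (he : ({a, b, i} : Finset ℕ) ∈ G.edges) :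
    G.IsGoodPair A a b := by
  have hba : ({b, a, i} : Finset ℕ) ∈ G.edges := by rwa [Finset.insert_comm]
  exact ⟨(h3.ne_of_mem_edges he).1, G.edge_sub _ he (by simp), G.edge_sub _ he (by simp), haA,
    hbA, fun k hk => ⟨link2_eq_singleton h3 hd hno hAV hA haA hbA hi he hk,
      link2_eq_singleton h3 hd hno hAV hA hbA haA hi hba hk⟩⟩

end LinksAtCrossingEdge

end HyperGraph

theorem good_pair_or_star_general (t : ℕ) (ht : 4 ≤ t) (G : HyperGraph)
    (h3 : G.IsUniform 3) (hd : G.IsDense) (hfree : G.Free (linearCycle t))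
    (hsub : Finset.Icc 1 (2 * t - 2) ⊆ G.verts)
    (hK : ∀ e ⊆ Finset.Icc 1 (2 * t - 2), e.card = 3 →
      e ≠ ({1, 2, 3} : Finset ℕ) → e ∈ G.edges)
    (a b : ℕ)
    (haA : a ∉ Finset.Icc 1 (2 * t - 2)) (hbA : b ∉ Finset.Icc 1 (2 * t - 2))
    (i : ℕ) (hi : i ∈ Finset.Icc 1 (2 * t - 2))
    (he : ({a, b, i} : Finset ℕ) ∈ G.edges) :
    G.IsGoodPair (Finset.Icc 1 (2 * t - 2)) a b ∨
      ∀ k ∈ Finset.Icc 1 (2 * t - 2), k ≠ i →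
        G.link2 a k = ({i} : Set ℕ) ∧ G.link2 b k = ({i} : Set ℕ) := by
  have hcard : (Finset.Icc 1 (2 * t - 2)).card = 2 * t - 2 := by simp
  have hno : ∀ v₁ v₂ v₃ v₄ v₅, ¬ G.IsAnchoredTwoPath (Finset.Icc 1 (2 * t - 2)) v₁ v₂ v₃ v₄ v₅ :=
    fun _ _ _ _ _ h => hfree (h.hasCopy_linearCycle ht h3 hcard.ge (by decide) hK)
  exact .inl (isGoodPair_of_mem_edges h3 hd hno hsub (by omega) haA hbA hi he)

/-- let `t ≥ 4` and let `G` be a dense `C_t^3`-free 3-graph such that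
every 3-subset of `[2t-2]` except `{1,2,3}` is an edge.  If `a ≠ b` lie outside
`[2t-2]` and `{a,b,i} ∈ E(G)` for some `i ∈ [2t-2]`, then either `{a,b}` is a good
pair to `[2t-2]`, or `N(a,k) = N(b,k) = {i}` for every `k ∈ [2t-2] ∖ {i}`. -/
theorem good_pair_or_star (t : ℕ) (ht : 4 ≤ t) (G : HyperGraph)
    (h3 : G.IsUniform 3) (hd : G.IsDense) (hfree : G.Free (linearCycle t))
    (hsub : Finset.Icc 1 (2 * t - 2) ⊆ G.verts)
    (hK : ∀ e ⊆ Finset.Icc 1 (2 * t - 2), e.card = 3 →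
      e ≠ ({1, 2, 3} : Finset ℕ) → e ∈ G.edges)
    (a b : ℕ) (ha : a ∈ G.verts) (hb : b ∈ G.verts) (hab : a ≠ b)
    (haA : a ∉ Finset.Icc 1 (2 * t - 2)) (hbA : b ∉ Finset.Icc 1 (2 * t - 2))
    (i : ℕ) (hi : i ∈ Finset.Icc 1 (2 * t - 2))
    (he : ({a, b, i} : Finset ℕ) ∈ G.edges) :
    G.IsGoodPair (Finset.Icc 1 (2 * t - 2)) a b ∨
      ∀ k ∈ Finset.Icc 1 (2 * t - 2), k ≠ i →
        G.link2 a k = ({i} : Set ℕ) ∧ G.link2 b k = ({i} : Set ℕ) :=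
  good_pair_or_star_general t ht G h3 hd hfree hsub hK a b haA hbA i hi he
end
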